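/- arXiv:1612.07652 — 9 statements merged into one kernel-verified Lean document; each statement's English description precedes it below -/
import Mathlib

section
/- If M is a matroid on ground set V, then the minimal number of independent sets of M needed to cover V equals the ceiling of ζ(M), where ζ(M) = max over nonempty S ⊆ V of |S| / rank_M(S). -/
open Finset

variable {V : Type*} [Fintype V] [DecidableEq V]

/-- A matroid, given by its collection of independent sets (as a predicate on finsets). -/
def IsMatroid (Indep : Finset V → Prop) : Prop :=
  Indep ∅ ∧ (∀ ⦃I J : Finset V⦄, Indep J → I ⊆ J → Indep I) ∧
    ∀ ⦃I J : Finset V⦄, Indep I → Indep J → I.card < J.card →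
      ∃ x ∈ J, x ∉ I ∧ Indep (insert x I)

/-- Looplessness: every singleton is independent. -/
def Loopless (Indep : Finset V → Prop) : Prop := ∀ v : V, Indep {v}

open scoped Classical in
/-- The rank of a set `S`: maximal size of an independent subset of `S`. -/
noncomputable def rnk (Indep : Finset V → Prop) (S : Finset V) : ℕ :=
  (S.powerset.filter (fun e => Indep e)).sup Finset.card

/-- `ζ(M) = max over nonempty S of |S| / rank(S)`. -/
noncomputable def zeta (Indep : Finset V → Prop) : ℝ :=
  sSup {x : ℝ | ∃ S : Finset V, S.Nonempty ∧ x = (S.card : ℝ) / (rnk Indep S : ℝ)}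

/-- The edge covering number: minimal number of edges of the complex covering `V`. -/
noncomputable def beta (Indep : Finset V → Prop) : ℕ :=
  sInf {k : ℕ | ∃ F : Finset (Finset V), (∀ e ∈ F, Indep e) ∧
    (∀ v : V, ∃ e ∈ F, v ∈ e) ∧ F.card = k}

/-- The fractional edge covering number. -/
noncomputable def betaStar (D : Finset V → Prop) : ℝ :=
  sInf {x : ℝ | ∃ f : Finset V → ℝ, (∀ e, 0 ≤ f e) ∧ (∀ e, f e ≠ 0 → D e) ∧
    (∀ v : V, 1 ≤ ∑ e : Finset V, if v ∈ e then f e else 0) ∧ x = ∑ e : Finset V, f e}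

open scoped Classical
set_option linter.unusedSectionVars false

namespace EdmondsAux

variable (Indep : Finset V → Prop)

lemma card_le_rnk (hI : Indep I) (hIS : I ⊆ S) : I.card ≤ rnk Indep S := by
  apply Finset.le_sup (f := Finset.card)
  simp [Finset.mem_filter, Finset.mem_powerset, hI, hIS]

lemma exists_rnk (hM : IsMatroid Indep) (S : Finset V) :
    ∃ I, I ⊆ S ∧ Indep I ∧ I.card = rnk Indep S := by
  have hne : (S.powerset.filter (fun e => Indep e)).Nonempty :=
    ⟨∅, by simp [Finset.mem_filter, hM.1]⟩
  obtain ⟨I, hI, hcard⟩ := Finset.exists_mem_eq_sup _ hne Finset.card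
  simp only [Finset.mem_filter, Finset.mem_powerset] at hI
  exact ⟨I, hI.1, hI.2, hcard.symm⟩

lemma rnk_mono (hST : S ⊆ T) : rnk Indep S ≤ rnk Indep T := by
  apply Finset.sup_le
  intro I hI
  simp only [Finset.mem_filter, Finset.mem_powerset] at hI
  exact card_le_rnk Indep hI.2 (hI.1.trans hST)

lemma rnk_le_card (hM : IsMatroid Indep) (S : Finset V) : rnk Indep S ≤ S.card := by
  obtain ⟨I, hIS, _, hcard⟩ := exists_rnk Indep hM S
  exact hcard ▸ Finset.card_le_card hIS

lemma rnk_extend (hM : IsMatroid Indep) (hI : Indep I) (hIS : I ⊆ S) :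
    ∃ J, I ⊆ J ∧ J ⊆ S ∧ Indep J ∧ J.card = rnk Indep S := by
  by_cases h : I.card = rnk Indep S
  · exact ⟨I, Finset.Subset.refl I, hIS, hI, h⟩
  · have hlt : I.card < rnk Indep S :=
      lt_of_le_of_ne (card_le_rnk Indep hI hIS) h
    obtain ⟨K, hKS, hK, hKcard⟩ := exists_rnk Indep hM S
    obtain ⟨x, hxK, hxI, hxind⟩ := hM.2.2 hI hK (hKcard ▸ hlt)
    have : rnk Indep S - (insert x I).card < rnk Indep S - I.card := by
      rw [Finset.card_insert_of_notMem hxI]; omega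
    obtain ⟨J, hJ1, hJ2, hJ3, hJ4⟩ :=
      rnk_extend hM hxind (Finset.insert_subset (hKS hxK) hIS)
    exact ⟨J, (Finset.subset_insert x I).trans hJ1, hJ2, hJ3, hJ4⟩
termination_by rnk Indep S - I.card

lemma indep_of_rnk_eq_card (hM : IsMatroid Indep) (h : rnk Indep S = S.card) : Indep S := by
  obtain ⟨I, hIS, hI, hcard⟩ := exists_rnk Indep hM S
  have : I = S := Finset.eq_of_subset_of_card_le hIS (by omega)
  exact this ▸ hI

lemma rnk_indep (hM : IsMatroid Indep) (hI : Indep I) : rnk Indep I = I.card :=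
  le_antisymm (rnk_le_card Indep hM I) (card_le_rnk Indep hI (Finset.Subset.refl I))

lemma rnk_lt_of_dep (hM : IsMatroid Indep) (hS : ¬ Indep S) : rnk Indep S < S.card := by
  rcases lt_or_eq_of_le (rnk_le_card Indep hM S) with h | h
  · exact h
  · exact absurd (indep_of_rnk_eq_card Indep hM h) hS

/-- If `y` is spanned by `A ⊆ B`, then adding `y` to `B` does not increase the rank. -/
lemma cl_insert (hM : IsMatroid Indep) {A B : Finset V} (hAB : A ⊆ B)
    (h : rnk Indep (insert y A) = rnk Indep A) :
    rnk Indep (insert y B) = rnk Indep B := by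
  by_cases hyB : y ∈ B
  · rw [Finset.insert_eq_self.2 hyB]
  by_cases hyA : y ∈ A
  · exact absurd (hAB hyA) hyB
  refine le_antisymm ?_ (rnk_mono Indep (Finset.subset_insert y B))
  by_contra hlt
  push_neg at hlt
  -- take a maximal independent subset of B containing a maximal one of A
  obtain ⟨J, hJA, hJind, hJcard⟩ := exists_rnk Indep hM A
  obtain ⟨J', hJJ', hJ'B, hJ'ind, hJ'card⟩ := rnk_extend Indep hM hJind (hJA.trans hAB)
  obtain ⟨K, hKB, hKind, hKcard⟩ := exists_rnk Indep hM (insert y B)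
  have hKJ' : J'.card < K.card := by omega
  obtain ⟨z, hzK, hzJ', hzind⟩ := hM.2.2 hJ'ind hKind hKJ'
  rcases Finset.mem_insert.1 (hKB hzK) with rfl | hzB
  · -- z = y : then insert y J is independent, contradicting h
    have hyJ : z ∉ J := fun hy => hzJ' (hJJ' hy)
    have : Indep (insert z J) := hM.2.1 hzind (Finset.insert_subset_insert _ hJJ')
    have hle : (insert z J).card ≤ rnk Indep (insert z A) :=
      card_le_rnk Indep this (Finset.insert_subset_insert _ hJA)
    rw [Finset.card_insert_of_notMem hyJ, h] at hle
    omega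
  · have : (insert z J').card ≤ rnk Indep B :=
      card_le_rnk Indep hzind (Finset.insert_subset hzB hJ'B)
    rw [Finset.card_insert_of_notMem hzJ'] at this
    omega

lemma eq_erase_of_card {J S : Finset V} (hJS : J ⊆ S) (h : J.card + 1 = S.card) :
    ∃ w ∈ S, w ∉ J ∧ J = S.erase w := by
  have h1 : (S \ J).card = 1 := by rw [Finset.card_sdiff_of_subset hJS]; omega
  obtain ⟨w, hw⟩ := Finset.card_eq_one.1 h1
  have hwS : w ∈ S \ J := hw ▸ Finset.mem_singleton_self w
  rw [Finset.mem_sdiff] at hwS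
  refine ⟨w, hwS.1, hwS.2, ?_⟩
  apply Finset.eq_of_subset_of_card_le
  · intro a ha
    exact Finset.mem_erase.2 ⟨fun h' => hwS.2 (h' ▸ ha), hJS ha⟩
  · rw [Finset.card_erase_of_mem hwS.1]; omega

/-- The fundamental circuit of `x` with respect to an independent set `I`. -/
noncomputable def circ (I : Finset V) (x : V) : Finset V :=
  (insert x I).filter (fun z => Indep ((insert x I).erase z))

lemma mem_circ {I : Finset V} {x z : V} :
    z ∈ circ Indep I x ↔ z ∈ insert x I ∧ Indep ((insert x I).erase z) := Finset.mem_filter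

lemma rnk_insert_dep (hM : IsMatroid Indep) {I : Finset V} {x : V} (hI : Indep I)
    (hx : x ∉ I) (hdep : ¬ Indep (insert x I)) : rnk Indep (insert x I) = I.card := by
  have h1 : rnk Indep (insert x I) < (insert x I).card := rnk_lt_of_dep Indep hM hdep
  have h2 : I.card ≤ rnk Indep (insert x I) :=
    card_le_rnk Indep hI (Finset.subset_insert x I)
  rw [Finset.card_insert_of_notMem hx] at h1
  omega

/-- The fundamental circuit is dependent. -/
lemma circ_dep (hM : IsMatroid Indep) {I : Finset V} {x : V} (hI : Indep I)
    (hx : x ∉ I) (hdep : ¬ Indep (insert x I)) : ¬ Indep (circ Indep I x) := by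
  intro hC
  have hCsub : circ Indep I x ⊆ insert x I := Finset.filter_subset _ _
  obtain ⟨J, hCJ, hJsub, hJind, hJcard⟩ := rnk_extend Indep hM hC hCsub
  rw [rnk_insert_dep Indep hM hI hx hdep] at hJcard
  obtain ⟨w, hwS, hwJ, hJeq⟩ := eq_erase_of_card hJsub
    (by rw [hJcard, Finset.card_insert_of_notMem hx])
  have : w ∈ circ Indep I x := mem_circ Indep |>.2 ⟨hwS, hJeq ▸ hJind⟩
  exact hwJ (hCJ this)

/-- Removing an element from a circuit does not lower the rank. -/
lemma rnk_circ_erase (hM : IsMatroid Indep) {I : Finset V} {x z : V} (hI : Indep I)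
    (hx : x ∉ I) (hdep : ¬ Indep (insert x I)) (hz : z ∈ circ Indep I x) :
    rnk Indep (insert z ((circ Indep I x).erase z)) = rnk Indep ((circ Indep I x).erase z) := by
  rw [Finset.insert_erase hz]
  have h1 : Indep ((circ Indep I x).erase z) := by
    have hsub : (circ Indep I x).erase z ⊆ (insert x I).erase z :=
      Finset.erase_subset_erase z (Finset.filter_subset _ _)
    exact hM.2.1 ((mem_circ Indep |>.1 hz).2) hsub
  have h2 : rnk Indep ((circ Indep I x).erase z) = (circ Indep I x).card - 1 := by
    rw [rnk_indep Indep hM h1, Finset.card_erase_of_mem hz]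
  have h3 : rnk Indep (circ Indep I x) < (circ Indep I x).card :=
    rnk_lt_of_dep Indep hM (circ_dep Indep hM hI hx hdep)
  have h4 : rnk Indep ((circ Indep I x).erase z) ≤ rnk Indep (circ Indep I x) :=
    rnk_mono Indep (Finset.erase_subset z _)
  have h5 : z ∈ circ Indep I x := hz
  have h6 : 1 ≤ (circ Indep I x).card := Finset.card_pos.2 ⟨z, hz⟩
  omega

/-- If the whole of `I` spans `x`, and all elements of fundamental-circuit type outside `A`
are excluded, then `A` already spans `x`. -/
lemma closure_restrict (hM : IsMatroid Indep) {I A : Finset V} {x : V} (hI : Indep I)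
    (hx : x ∉ I) (hdep : ¬ Indep (insert x I)) (hAI : A ⊆ I)
    (h : ∀ y ∈ I, y ∉ A → ¬ Indep ((insert x I).erase y)) : ¬ Indep (insert x A) := by
  intro hind
  have hsub : insert x A ⊆ insert x I := Finset.insert_subset_insert x hAI
  obtain ⟨J, hJ1, hJ2, hJ3, hJ4⟩ := rnk_extend Indep hM hind hsub
  rw [rnk_insert_dep Indep hM hI hx hdep] at hJ4
  obtain ⟨w, hwS, hwJ, hJeq⟩ := eq_erase_of_card hJ2
    (by rw [hJ4, Finset.card_insert_of_notMem hx])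
  have hwx : w ≠ x := fun h' => hwJ (h' ▸ hJ1 (Finset.mem_insert_self x A))
  have hwI : w ∈ I := (Finset.mem_insert.1 hwS).resolve_left hwx
  have hwA : w ∉ A := fun h' => hwJ (hJ1 (Finset.mem_insert_of_mem h'))
  exact h w hwI hwA (hJeq ▸ hJ3)

/-- If `A` spans each element of `S`, then `rnk S ≤ |A|`. -/
lemma rnk_le_of_spans (hM : IsMatroid Indep) {A S : Finset V} (hA : Indep A) (hAS : A ⊆ S)
    (h : ∀ z ∈ S, z ∉ A → ¬ Indep (insert z A)) : rnk Indep S ≤ A.card := by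
  by_contra hlt
  push_neg at hlt
  obtain ⟨J, hJS, hJind, hJcard⟩ := exists_rnk Indep hM S
  obtain ⟨z, hzJ, hzA, hzind⟩ := hM.2.2 hA hJind (by omega)
  exact h z (hJS hzJ) hzA hzind

/-- Fundamental circuits are unchanged when a spanned-avoiding element `v` is added:
if `insert v I` is independent then the basis exchange sets for `x` over `I` remain
independent after inserting `v`. -/
lemma circ_insert (hM : IsMatroid Indep) {I : Finset V} {x v y : V} (hI : Indep I)
    (hx : x ∉ I) (hdep : ¬ Indep (insert x I)) (hv : v ∉ I) (hvx : v ≠ x)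
    (hvind : Indep (insert v I)) (hy : y ∈ insert x I)
    (herase : Indep ((insert x I).erase y)) :
    Indep (insert v ((insert x I).erase y)) := by
  by_cases hyx : y = x
  · subst hyx
    rwa [Finset.erase_insert hx]
  by_contra hcon
  have hyI : y ∈ I := (Finset.mem_insert.1 hy).resolve_left hyx
  have hvA : v ∉ (insert x I).erase y := by
    simp only [Finset.mem_erase, Finset.mem_insert]
    tauto
  -- v is spanned by A := (insert x I).erase y
  have hAcard : ((insert x I).erase y).card = I.card := by
    rw [Finset.card_erase_of_mem hy, Finset.card_insert_of_notMem hx]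
    omega
  have hrA : rnk Indep (insert v ((insert x I).erase y)) =
      rnk Indep ((insert x I).erase y) := by
    refine le_antisymm ?_ (rnk_mono Indep (Finset.subset_insert _ _))
    have h1 : rnk Indep (insert v ((insert x I).erase y)) < (insert v ((insert x I).erase y)).card :=
      rnk_lt_of_dep Indep hM hcon
    rw [Finset.card_insert_of_notMem hvA, hAcard] at h1
    have h2 : rnk Indep ((insert x I).erase y) = I.card := by
      rw [rnk_indep Indep hM herase, hAcard]
    omega
  have hfull : rnk Indep (insert v (insert x I)) = rnk Indep (insert x I) :=
    cl_insert Indep hM (Finset.erase_subset y _) hrA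
  rw [rnk_insert_dep Indep hM hI hx hdep] at hfull
  have : (insert v I).card ≤ rnk Indep (insert v (insert x I)) := by
    apply card_le_rnk Indep hvind
    intro a ha
    rcases Finset.mem_insert.1 ha with rfl | ha
    · exact Finset.mem_insert_self _ _
    · exact Finset.mem_insert_of_mem (Finset.mem_insert_of_mem ha)
  rw [Finset.card_insert_of_notMem hv] at this
  omega

/-- The serial exchange lemma: performing a triangular system of exchanges on an
independent set keeps it independent. -/
lemma serial_exchange (hM : IsMatroid Indep) (I : Finset V) (hI : Indep I)
    (P : Finset ℕ) (x y : ℕ → V)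
    (hx : ∀ j ∈ P, x j ∉ I) (hy : ∀ j ∈ P, y j ∈ I)
    (hdep : ∀ j ∈ P, ¬ Indep (insert (x j) I))
    (harc : ∀ j ∈ P, Indep ((insert (x j) I).erase (y j)))
    (hxinj : Set.InjOn x P) (hyinj : Set.InjOn y P)
    (htri : ∀ a ∈ P, ∀ b ∈ P, a < b → ¬ Indep ((insert (x a) I).erase (y b))) :
    Indep ((I \ P.image y) ∪ P.image x) := by
  set X := P.image x with hX
  have claim : ∀ n : ℕ, ∀ b : ℕ, (P.filter (fun j => b ≤ j)).card = n →
      rnk Indep ((I ∪ X) \ ((P.filter (fun j => b ≤ j)).image y)) = rnk Indep (I ∪ X) := by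
    intro n
    induction n with
    | zero =>
      intro b hb
      have h0 : P.filter (fun j => b ≤ j) = ∅ := Finset.card_eq_zero.1 hb
      rw [h0]; simp
    | succ n ih =>
      intro b hb
      set Q := P.filter (fun j => b ≤ j) with hQ
      have hQne : Q.Nonempty := Finset.card_pos.1 (by omega)
      set c := Q.min' hQne with hcdef
      have hcQ : c ∈ Q := Q.min'_mem hQne
      have hcP : c ∈ P := (Finset.mem_filter.1 hcQ).1
      have hbc : b ≤ c := (Finset.mem_filter.1 hcQ).2
      set Q' := P.filter (fun j => c + 1 ≤ j) with hQ'
      have hQeq : Q = insert c Q' := by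
        ext j
        simp only [Finset.mem_insert, Finset.mem_filter, hQ, hQ']
        constructor
        · rintro ⟨hjP, hbj⟩
          by_cases hjc : j = c
          · exact Or.inl hjc
          · have hle := Q.min'_le j (Finset.mem_filter.2 ⟨hjP, hbj⟩)
            rw [← hcdef] at hle
            exact Or.inr ⟨hjP, by omega⟩
        · rintro (rfl | ⟨hjP, hcj⟩)
          · exact ⟨hcP, hbc⟩
          · exact ⟨hjP, by omega⟩
      have hcQ' : c ∉ Q' := by
        simp only [hQ', Finset.mem_filter]
        rintro ⟨-, h⟩; omega
      have hQ'card : Q'.card = n := by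
        have h1 : Q.card = Q'.card + 1 := by
          rw [hQeq, Finset.card_insert_of_notMem hcQ']
        omega
      have ihQ : rnk Indep ((I ∪ X) \ Q'.image y) = rnk Indep (I ∪ X) := by
        have := ih (c + 1) hQ'card
        rw [← hQ'] at this
        exact this
      have himg : Q.image y = insert (y c) (Q'.image y) := by
        rw [hQeq, Finset.image_insert]
      have hycQ' : y c ∉ Q'.image y := by
        intro h
        obtain ⟨d, hd, hdy⟩ := Finset.mem_image.1 h
        have hdP : d ∈ P := (Finset.mem_filter.1 hd).1
        have : d = c := hyinj (Finset.mem_coe.2 hdP) (Finset.mem_coe.2 hcP) hdy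
        exact hcQ' (this ▸ hd)
      have hset : (I ∪ X) \ Q.image y = ((I ∪ X) \ Q'.image y).erase (y c) := by
        rw [himg]
        ext a
        simp only [Finset.mem_sdiff, Finset.mem_erase, Finset.mem_insert]
        tauto
      set C := circ Indep I (x c) with hC
      have hxc : x c ∉ I := hx c hcP
      have hdepc := hdep c hcP
      have hycC : y c ∈ C := (mem_circ Indep).2
        ⟨Finset.mem_insert_of_mem (hy c hcP), harc c hcP⟩
      have hrC : rnk Indep (insert (y c) (C.erase (y c))) = rnk Indep (C.erase (y c)) :=
        rnk_circ_erase Indep hM hI hxc hdepc hycC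
      have hsub : C.erase (y c) ⊆ (I ∪ X) \ Q.image y := by
        intro z hz
        have hzC : z ∈ C := Finset.mem_of_mem_erase hz
        have hzne : z ≠ y c := (Finset.mem_erase.1 hz).1
        have hzIX : z ∈ I ∪ X := by
          rcases Finset.mem_insert.1 ((mem_circ Indep).1 hzC).1 with rfl | hzI
          · exact Finset.mem_union_right _ (Finset.mem_image_of_mem x hcP)
          · exact Finset.mem_union_left _ hzI
        refine Finset.mem_sdiff.2 ⟨hzIX, ?_⟩
        intro hmem
        obtain ⟨d, hdQ, hdy⟩ := Finset.mem_image.1 hmem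
        have hdP : d ∈ P := (Finset.mem_filter.1 hdQ).1
        by_cases hdc : d = c
        · exact hzne (by rw [← hdy, hdc])
        · have hcled : c ≤ d := Q.min'_le d hdQ
          have hcd : c < d := by omega
          have htr := htri c hcP d hdP hcd
          have hzC2 := ((mem_circ Indep).1 hzC).2
          rw [hdy] at htr
          exact htr hzC2
      rw [hset, ← ihQ]
      have hycT : y c ∈ (I ∪ X) \ Q'.image y :=
        Finset.mem_sdiff.2 ⟨Finset.mem_union_left _ (hy c hcP), hycQ'⟩
      refine le_antisymm (rnk_mono Indep (Finset.erase_subset _ _)) ?_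
      have hsub2 : C.erase (y c) ⊆ ((I ∪ X) \ Q'.image y).erase (y c) := hset ▸ hsub
      have hfin := cl_insert Indep hM hsub2 hrC
      rw [Finset.insert_erase hycT] at hfin
      exact hfin.le
  have hP0 : P.filter (fun j => 0 ≤ j) = P :=
    Finset.filter_true_of_mem (fun _ _ => Nat.zero_le _)
  have hkey := claim (P.card) 0 (by rw [hP0])
  rw [hP0] at hkey
  have hXY : ∀ a ∈ X, a ∉ P.image y := by
    intro a haX hmem
    obtain ⟨j, hjP, hjx⟩ := Finset.mem_image.1 haX
    obtain ⟨d, hdP, hdy⟩ := Finset.mem_image.1 hmem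
    exact hx j hjP (by rw [hjx, ← hdy]; exact hy d hdP)
  have hJeq : (I ∪ X) \ P.image y = (I \ P.image y) ∪ X := by
    ext a
    simp only [Finset.mem_sdiff, Finset.mem_union]
    constructor
    · rintro ⟨h1 | h1, h2⟩
      · exact Or.inl ⟨h1, h2⟩
      · exact Or.inr h1
    · rintro (⟨h1, h2⟩ | h1)
      · exact ⟨Or.inl h1, h2⟩
      · exact ⟨Or.inr h1, hXY a h1⟩
  rw [hJeq] at hkey
  have hyP : P.image y ⊆ I := by
    intro a ha
    obtain ⟨d, hdP, hdy⟩ := Finset.mem_image.1 ha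
    exact hdy ▸ hy d hdP
  have hge : I.card ≤ rnk Indep ((I \ P.image y) ∪ X) := by
    rw [hkey]
    calc I.card = rnk Indep I := (rnk_indep Indep hM hI).symm
    _ ≤ rnk Indep (I ∪ X) := rnk_mono Indep Finset.subset_union_left
  have hc1 : (I \ P.image y).card = I.card - P.card := by
    rw [Finset.card_sdiff_of_subset hyP, Finset.card_image_of_injOn hyinj]
  have hc2 : X.card ≤ P.card := Finset.card_image_le
  have hc3 : P.card ≤ I.card := by
    rw [← Finset.card_image_of_injOn hyinj]
    exact Finset.card_le_card hyP
  have hcard : ((I \ P.image y) ∪ X).card ≤ I.card := by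
    calc ((I \ P.image y) ∪ X).card ≤ (I \ P.image y).card + X.card :=
      Finset.card_union_le _ _
    _ ≤ I.card := by omega
  apply indep_of_rnk_eq_card Indep hM
  have := rnk_le_card Indep hM ((I \ P.image y) ∪ X)
  omega

variable {k : ℕ}

/-- The exchange step relation for the augmenting-path argument. -/
def stepR (F : Fin k → Finset V) (a b : V) : Prop :=
  ∃ i, a ∉ F i ∧ ¬ Indep (insert a (F i)) ∧ b ∈ F i ∧ Indep ((insert a (F i)).erase b)

/-- A sink: an element that can directly be added to one of the sets. -/
def sinkR (F : Fin k → Finset V) (a : V) : Prop :=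
  ∃ i, a ∉ F i ∧ Indep (insert a (F i))

/-- There is an augmenting path of length `m` from `t` to a sink. -/
def PathP (F : Fin k → Finset V) (t : V) (m : ℕ) : Prop :=
  ∃ v : ℕ → V, v 0 = t ∧ (∀ j < m, stepR Indep F (v j) (v (j+1))) ∧ sinkR Indep F (v m)

/-- If no augmenting path exists, we contradict the counting condition. -/
lemma aug_blocked (hM : IsMatroid Indep) (F : Fin k → Finset V)
    (hind : ∀ i, Indep (F i))
    (hdisj : ∀ i j : Fin k, ∀ w, w ∈ F i → w ∈ F j → i = j)
    (hcond : ∀ S : Finset V, S.Nonempty → S.card ≤ k * rnk Indep S)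
    (t : V) (ht : ∀ i, t ∉ F i)
    (hex : ¬ ∃ m, PathP Indep F t m) : False := by
  set Z : Finset V := Finset.univ.filter (fun w => ∃ n, ∃ v : ℕ → V,
    v 0 = t ∧ (∀ j < n, stepR Indep F (v j) (v (j+1))) ∧ v n = w) with hZ
  have htZ : t ∈ Z := by
    rw [hZ, Finset.mem_filter]
    exact ⟨Finset.mem_univ t, 0, fun _ => t, rfl, fun j hj => absurd hj (by omega), rfl⟩
  have hZclosed : ∀ w ∈ Z, ∀ w', stepR Indep F w w' → w' ∈ Z := by
    intro w hw w' hstep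
    rw [hZ, Finset.mem_filter] at hw ⊢
    obtain ⟨-, n, v, hv0, hch, hvn⟩ := hw
    refine ⟨Finset.mem_univ w', n + 1, fun j => if j < n + 1 then v j else w', ?_, ?_, ?_⟩
    · simp [hv0]
    · intro j hj
      by_cases hjn : j < n
      · simpa [show j < n + 1 by omega, show j + 1 < n + 1 by omega] using hch j hjn
      · have hj' : j = n := by omega
        simpa [hj', show n < n + 1 by omega, hvn] using hstep
    · simp
  have hZnosink : ∀ w ∈ Z, ¬ sinkR Indep F w := by
    intro w hw hs
    rw [hZ, Finset.mem_filter] at hw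
    obtain ⟨-, n, v, hv0, hch, hvn⟩ := hw
    exact hex ⟨n, v, hv0, hch, hvn ▸ hs⟩
  -- every element of Z other than t lies in some F i
  have hZcov : ∀ w ∈ Z, w ≠ t → ∃ i, w ∈ F i := by
    intro w hw hwt
    rw [hZ, Finset.mem_filter] at hw
    obtain ⟨-, n, v, hv0, hch, hvn⟩ := hw
    rcases Nat.eq_zero_or_pos n with rfl | hn
    · exact absurd (hvn ▸ hv0) hwt
    · obtain ⟨i, -, -, hmem, -⟩ := hch (n - 1) (by omega)
      rw [show n - 1 + 1 = n by omega, hvn] at hmem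
      exact ⟨i, hmem⟩
  -- each F i ∩ Z spans Z
  have hspan : ∀ i, rnk Indep Z ≤ (F i ∩ Z).card := by
    intro i
    apply rnk_le_of_spans Indep hM (hM.2.1 (hind i) Finset.inter_subset_left)
      Finset.inter_subset_right
    intro z hzZ hzA
    have hzF : z ∉ F i := fun h => hzA (Finset.mem_inter.2 ⟨h, hzZ⟩)
    have hznosink := hZnosink z hzZ
    have hzdep : ¬ Indep (insert z (F i)) := by
      intro h
      exact hznosink ⟨i, hzF, h⟩
    have := closure_restrict Indep hM (hind i) hzF hzdep
      (Finset.inter_subset_left : F i ∩ Z ⊆ F i) ?_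
    · exact this
    · intro y hyF hyA hind'
      have hyZ : y ∈ Z := hZclosed z hzZ y ⟨i, hzF, hzdep, hyF, hind'⟩
      exact hyA (Finset.mem_inter.2 ⟨hyF, hyZ⟩)
  -- counting
  have hdisj' : ∀ i ∈ Finset.univ (α := Fin k), ∀ j ∈ Finset.univ (α := Fin k), i ≠ j →
      Disjoint (F i ∩ Z) (F j ∩ Z) := by
    intro i _ j _ hij
    rw [Finset.disjoint_left]
    intro w hwi hwj
    exact hij (hdisj i j w (Finset.mem_inter.1 hwi).1 (Finset.mem_inter.1 hwj).1)
  have hsum : ∑ i : Fin k, (F i ∩ Z).card =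
      (Finset.univ.biUnion (fun i => F i ∩ Z)).card :=
    (Finset.card_biUnion hdisj').symm
  have hsub : Finset.univ.biUnion (fun i => F i ∩ Z) ⊆ Z.erase t := by
    intro w hw
    obtain ⟨i, -, hwi⟩ := Finset.mem_biUnion.1 hw
    rw [Finset.mem_inter] at hwi
    exact Finset.mem_erase.2 ⟨fun h => ht i (h ▸ hwi.1), hwi.2⟩
  have hcount : ∑ i : Fin k, (F i ∩ Z).card ≤ Z.card - 1 := by
    rw [hsum]
    calc (Finset.univ.biUnion (fun i => F i ∩ Z)).card ≤ (Z.erase t).card :=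
      Finset.card_le_card hsub
    _ = Z.card - 1 := by rw [Finset.card_erase_of_mem htZ]
  have hksum : k * rnk Indep Z ≤ ∑ i : Fin k, (F i ∩ Z).card := by
    calc k * rnk Indep Z = ∑ _i : Fin k, rnk Indep Z := by
          rw [Finset.sum_const, Finset.card_univ, Fintype.card_fin, smul_eq_mul]
    _ ≤ ∑ i : Fin k, (F i ∩ Z).card := Finset.sum_le_sum (fun i _ => hspan i)
  have hZcard := hcond Z ⟨t, htZ⟩
  have hZpos : 1 ≤ Z.card := Finset.card_pos.2 ⟨t, htZ⟩
  omega

/-- Splicing a path: shortening it by `δ` if there is a shortcut. -/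
lemma splice {step : V → V → Prop} {sink : V → Prop} {v : ℕ → V} {m a δ : ℕ}
    (hch : ∀ j < m, step (v j) (v (j+1))) (hs : sink (v m)) (haδ : a + δ ≤ m)
    (hlink : a + δ < m → step (v a) (v (a + 1 + δ)))
    (hend : a + δ = m → sink (v a)) :
    ∃ v' : ℕ → V, v' 0 = v 0 ∧ (∀ j < m - δ, step (v' j) (v' (j+1))) ∧ sink (v' (m - δ)) := by
  refine ⟨fun j => if j ≤ a then v j else v (j + δ), by simp, ?_, ?_⟩
  · intro j hj
    rcases lt_trichotomy j a with h | rfl | h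
    · simpa [show j ≤ a by omega, show j + 1 ≤ a by omega] using hch j (by omega)
    · have hlt : j + δ < m := by omega
      simpa [show j ≤ j by omega, show ¬ (j + 1 ≤ j) by omega] using hlink hlt
    · have h1 : ¬ (j ≤ a) := by omega
      have h2 : ¬ (j + 1 ≤ a) := by omega
      simpa [h1, h2, show j + 1 + δ = j + δ + 1 by omega] using hch (j + δ) (by omega)
  · rcases lt_or_eq_of_le haδ with h | h
    · have h1 : ¬ (m - δ ≤ a) := by omega
      simpa [h1, show m - δ + δ = m by omega] using hs
    · have h1 : m - δ = a := by omega
      simpa [h1] using hend h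

/-- The augmentation lemma: one more element can be absorbed into the system. -/
lemma aug (hM : IsMatroid Indep) (F : Fin k → Finset V)
    (hind : ∀ i, Indep (F i))
    (hdisj : ∀ i j : Fin k, ∀ w, w ∈ F i → w ∈ F j → i = j)
    (hcond : ∀ S : Finset V, S.Nonempty → S.card ≤ k * rnk Indep S)
    (t : V) (ht : ∀ i, t ∉ F i) :
    ∃ G : Fin k → Finset V, (∀ i, Indep (G i)) ∧
      (∀ i j : Fin k, ∀ w, w ∈ G i → w ∈ G j → i = j) ∧
      Finset.univ.biUnion G = insert t (Finset.univ.biUnion F) := by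
  by_cases hex : ∃ m, PathP Indep F t m
  case neg => exact absurd (aug_blocked Indep hM F hind hdisj hcond t ht hex) id
  set m := Nat.find hex with hm
  obtain ⟨v, hv0, hch, hsink⟩ : PathP Indep F t m := Nat.find_spec hex
  -- minimality consequences
  have hinj : ∀ a b, a ≤ m → b ≤ m → v a = v b → a = b := by
    intro a b ham hbm heq
    by_contra hne
    wlog hab : a < b generalizing a b
    · exact this b a hbm ham heq.symm (Ne.symm hne) (by omega)
    obtain ⟨v', h1, h2, h3⟩ := splice (δ := b - a) (a := a) hch hsink (by omega)
      (fun hlt => by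
        have he : a + 1 + (b - a) = b + 1 := by omega
        rw [he, heq]
        exact hch b (by omega))
      (fun hend => by
        have : v a = v m := by rw [heq]; congr 1; omega
        rw [this]; exact hsink)
    exact Nat.find_min hex (show m - (b - a) < m by omega) ⟨v', h1.trans hv0, h2, h3⟩
  have hnoshort : ∀ a c, a + 1 < c → c ≤ m → ¬ stepR Indep F (v a) (v c) := by
    intro a c hac hcm hstep
    obtain ⟨v', h1, h2, h3⟩ := splice (δ := c - a - 1) (a := a) hch hsink (by omega)
      (fun _ => by
        have he : a + 1 + (c - a - 1) = c := by omega
        rw [he]; exact hstep)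
      (fun hend => by omega)
    exact Nat.find_min hex (show m - (c - a - 1) < m by omega) ⟨v', h1.trans hv0, h2, h3⟩
  have hnosink : ∀ j < m, ¬ sinkR Indep F (v j) := by
    intro j hj hs
    exact Nat.find_min hex hj ⟨v, hv0, fun l hl => hch l (by omega), hs⟩
  obtain ⟨istar, hsm, hsind⟩ := hsink
  -- labels
  have hlab : ∀ j, ∃ i : Fin k, j < m → (v j ∉ F i ∧ ¬ Indep (insert (v j) (F i)) ∧
      v (j+1) ∈ F i ∧ Indep ((insert (v j) (F i)).erase (v (j+1)))) := by
    intro j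
    by_cases hj : j < m
    · obtain ⟨i, h⟩ := hch j hj
      exact ⟨i, fun _ => h⟩
    · exact ⟨istar, fun h => absurd h hj⟩
  choose ℓ hℓ using hlab
  set P : Fin k → Finset ℕ := fun i => (Finset.range m).filter (fun j => ℓ j = i) with hP
  have hmemP : ∀ {i j}, j ∈ P i ↔ j < m ∧ ℓ j = i := by
    intro i j
    rw [hP]
    simp [Finset.mem_filter, Finset.mem_range]
  set Xs : Fin k → Finset V := fun i => (P i).image v with hXs
  set Ys : Fin k → Finset V := fun i => (P i).image (fun j => v (j+1)) with hYs
  set B : Fin k → Finset V := fun i => if i = istar then insert (v m) (F i) else F i with hB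
  set G : Fin k → Finset V := fun i => (B i \ Ys i) ∪ Xs i with hG
  have hBco : ∀ i, B i = if i = istar then insert (v m) (F i) else F i := fun i => rfl
  have hFB : ∀ i, F i ⊆ B i := by
    intro i
    rw [hBco i]
    by_cases h : i = istar
    · rw [if_pos h]; exact Finset.subset_insert _ _
    · rw [if_neg h]
  have hBind : ∀ i, Indep (B i) := by
    intro i
    rw [hBco i]
    by_cases h : i = istar
    · rw [if_pos h]; exact h ▸ hsind
    · rw [if_neg h]; exact hind i
  -- independence of the new system
  have hGind : ∀ i, Indep (G i) := by
    intro i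
    rw [hG, hXs, hYs]
    apply serial_exchange Indep hM (B i) (hBind i) (P i) v (fun j => v (j+1))
    · -- x j ∉ B i
      intro j hj
      obtain ⟨hjm, hji⟩ := hmemP.1 hj
      obtain ⟨h1, -, -, -⟩ := hℓ j hjm
      rw [hji] at h1
      rw [hBco i]
      by_cases h : i = istar
      · rw [if_pos h, Finset.mem_insert]
        rintro (heq | hmem)
        · exact absurd (hinj j m (by omega) le_rfl heq) (by omega)
        · exact h1 hmem
      · rw [if_neg h]; exact h1
    · -- y j ∈ B i
      intro j hj
      obtain ⟨hjm, hji⟩ := hmemP.1 hj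
      obtain ⟨-, -, h3, -⟩ := hℓ j hjm
      exact hFB i (hji ▸ h3)
    · -- dependence
      intro j hj
      obtain ⟨hjm, hji⟩ := hmemP.1 hj
      obtain ⟨-, h2, -, -⟩ := hℓ j hjm
      rw [hji] at h2
      intro hcontra
      exact h2 (hM.2.1 hcontra (Finset.insert_subset_insert _ (hFB i)))
    · -- the arc condition
      intro j hj
      obtain ⟨hjm, hji⟩ := hmemP.1 hj
      obtain ⟨h1, h2, h3, h4⟩ := hℓ j hjm
      rw [hji] at h1 h2 h3 h4
      rw [hBco i]
      by_cases h : i = istar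
      · subst h
        have hvm1 : v m ≠ v (j+1) := fun heq => hsm (heq ▸ h3)
        have hvmj : v m ≠ v j := fun heq =>
          absurd (hinj m j le_rfl (by omega) heq) (by omega)
        have hkey := circ_insert Indep hM (hind i) h1 h2 hsm hvmj hsind
          (Finset.mem_insert_of_mem h3) h4
        have hseteq : (insert (v j) (insert (v m) (F i))).erase (v (j+1)) =
            insert (v m) ((insert (v j) (F i)).erase (v (j+1))) := by
          ext a
          simp only [Finset.mem_erase, Finset.mem_insert]
          constructor
          · rintro ⟨hne, (h' | h' | h')⟩
            · exact Or.inr ⟨hne, Or.inl h'⟩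
            · exact Or.inl h'
            · exact Or.inr ⟨hne, Or.inr h'⟩
          · rintro (h' | ⟨hne, (h' | h')⟩)
            · exact ⟨h' ▸ hvm1, Or.inr (Or.inl h')⟩
            · exact ⟨hne, Or.inl h'⟩
            · exact ⟨hne, Or.inr (Or.inr h')⟩
        rw [if_pos rfl, hseteq]
        exact hkey
      · rw [if_neg h]; exact h4
    · -- injectivity of x = v
      intro a ha b hb heq
      rw [Finset.mem_coe, hmemP] at ha hb
      exact hinj a b (by omega) (by omega) heq
    · -- injectivity of y
      intro a ha b hb heq
      rw [Finset.mem_coe, hmemP] at ha hb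
      have := hinj (a+1) (b+1) (by omega) (by omega) heq
      omega
    · -- triangularity
      intro a ha b hb hab
      obtain ⟨ham, hai⟩ := hmemP.1 ha
      obtain ⟨hbm, hbi⟩ := hmemP.1 hb
      obtain ⟨ha1, ha2, -, -⟩ := hℓ a ham
      obtain ⟨-, -, hb3, -⟩ := hℓ b hbm
      rw [hai] at ha1 ha2
      rw [hbi] at hb3
      have hns := hnoshort a (b+1) (by omega) (by omega)
      have hbase : ¬ Indep ((insert (v a) (F i)).erase (v (b+1))) := by
        intro hcontra
        exact hns ⟨i, ha1, ha2, hb3, hcontra⟩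
      intro hcontra
      apply hbase
      apply hM.2.1 hcontra
      apply Finset.erase_subset_erase
      exact Finset.insert_subset_insert _ (hFB i)
  -- location facts
  have hsrc : ∀ a, a < m → v a ∈ Xs (ℓ a) := by
    intro a ha
    rw [hXs]
    exact Finset.mem_image_of_mem v (hmemP.2 ⟨ha, rfl⟩)
  have htgt : ∀ a, a < m → v (a+1) ∈ F (ℓ a) := fun a ha => (hℓ a ha).2.2.1
  have htgtY : ∀ a, a < m → v (a+1) ∈ Ys (ℓ a) := by
    intro a ha
    rw [hYs]
    exact Finset.mem_image_of_mem _ (hmemP.2 ⟨ha, rfl⟩)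
  have hmemXs : ∀ {i w}, w ∈ Xs i → ∃ a, a < m ∧ ℓ a = i ∧ w = v a := by
    intro i w hw
    rw [hXs] at hw
    obtain ⟨a, haP, hav⟩ := Finset.mem_image.1 hw
    obtain ⟨ham, hai⟩ := hmemP.1 haP
    exact ⟨a, ham, hai, hav.symm⟩
  have hmemYs : ∀ {i w}, w ∈ Ys i → ∃ a, a < m ∧ ℓ a = i ∧ w = v (a+1) := by
    intro i w hw
    rw [hYs] at hw
    obtain ⟨a, haP, hav⟩ := Finset.mem_image.1 hw
    obtain ⟨ham, hai⟩ := hmemP.1 haP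
    exact ⟨a, ham, hai, hav.symm⟩
  have hmemB : ∀ {i w}, w ∈ B i → w ∈ F i ∨ (i = istar ∧ w = v m) := by
    intro i w hw
    rw [hBco i] at hw
    by_cases h : i = istar
    · rw [if_pos h] at hw
      rcases Finset.mem_insert.1 hw with h' | h'
      · exact Or.inr ⟨h, h'⟩
      · exact Or.inl h'
    · rw [if_neg h] at hw
      exact Or.inl hw
  -- if w is in Xs i and in B j \ Ys j, contradiction
  have hXB : ∀ i j w, w ∈ Xs i → w ∈ B j \ Ys j → False := by
    intro i j w hwX hwB
    obtain ⟨a, ham, hai, rfl⟩ := hmemXs hwX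
    rw [Finset.mem_sdiff] at hwB
    rcases hmemB hwB.1 with hF | ⟨hj, heq⟩
    · rcases Nat.eq_zero_or_pos a with rfl | hapos
      · exact ht j (hv0 ▸ hF)
      · have : j = ℓ (a-1) := hdisj j (ℓ (a-1)) (v a) hF
          (by have := htgt (a-1) (by omega); rwa [show a - 1 + 1 = a by omega] at this)
        apply hwB.2
        rw [this]
        have := htgtY (a-1) (by omega)
        rwa [show a - 1 + 1 = a by omega] at this
    · exact absurd (hinj a m (by omega) le_rfl heq) (by omega)
  -- v m is not removed from istar's set
  have hvmY : v m ∉ Ys istar := by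
    intro hmem
    obtain ⟨c, hcm, hci, heq⟩ := hmemYs hmem
    have hc1 : c + 1 = m := hinj (c+1) m (by omega) le_rfl heq.symm
    have := htgt c hcm
    rw [hc1, hci] at this
    exact hsm this
  -- disjointness
  have hGdisj : ∀ i j : Fin k, ∀ w, w ∈ G i → w ∈ G j → i = j := by
    intro i j w hwi hwj
    rw [hG] at hwi hwj
    rcases Finset.mem_union.1 hwi with hwi' | hwi' <;>
      rcases Finset.mem_union.1 hwj with hwj' | hwj'
    · -- both in B \ Y parts
      rw [Finset.mem_sdiff] at hwi' hwj'
      rcases hmemB hwi'.1 with hFi | ⟨hi, heqi⟩ <;>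
        rcases hmemB hwj'.1 with hFj | ⟨hj, heqj⟩
      · exact hdisj i j w hFi hFj
      · -- w = v m ∈ F i
        exfalso
        subst heqj
        rcases Nat.eq_zero_or_pos m with hm0 | hmpos
        · exact ht i (by rw [hm0] at hFi; rwa [hv0] at hFi)
        · have hieq : i = ℓ (m-1) := hdisj i (ℓ (m-1)) (v m) hFi
            (by have := htgt (m-1) (by omega); rwa [show m - 1 + 1 = m by omega] at this)
          apply hwi'.2
          rw [hieq]
          have := htgtY (m-1) (by omega)
          rwa [show m - 1 + 1 = m by omega] at this
      · exfalso
        subst heqi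
        rcases Nat.eq_zero_or_pos m with hm0 | hmpos
        · exact ht j (by rw [hm0] at hFj; rwa [hv0] at hFj)
        · have hjeq : j = ℓ (m-1) := hdisj j (ℓ (m-1)) (v m) hFj
            (by have := htgt (m-1) (by omega); rwa [show m - 1 + 1 = m by omega] at this)
          apply hwj'.2
          rw [hjeq]
          have := htgtY (m-1) (by omega)
          rwa [show m - 1 + 1 = m by omega] at this
      · rw [hi, hj]
    · exact absurd (hXB j i w hwj' hwi') id
    · exact absurd (hXB i j w hwi' hwj') id
    · obtain ⟨a, ham, hai, rfl⟩ := hmemXs hwi'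
      obtain ⟨b, hbm, hbi, heq⟩ := hmemXs hwj'
      have : a = b := hinj a b (by omega) (by omega) heq
      rw [← hai, ← hbi, this]
  -- the union
  have hGunion : Finset.univ.biUnion G = insert t (Finset.univ.biUnion F) := by
    ext w
    rw [Finset.mem_biUnion, Finset.mem_insert, Finset.mem_biUnion]
    constructor
    · rintro ⟨i, -, hwG⟩
      rw [hG] at hwG
      rcases Finset.mem_union.1 hwG with hw' | hw'
      · rw [Finset.mem_sdiff] at hw'
        rcases hmemB hw'.1 with hF | ⟨hi, rfl⟩
        · exact Or.inr ⟨i, Finset.mem_univ i, hF⟩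
        · rcases Nat.eq_zero_or_pos m with hm0 | hmpos
          · exact Or.inl (by rw [← hv0, hm0])
          · refine Or.inr ⟨ℓ (m-1), Finset.mem_univ _, ?_⟩
            have := htgt (m-1) (by omega)
            rwa [show m - 1 + 1 = m by omega] at this
      · obtain ⟨a, ham, hai, rfl⟩ := hmemXs hw'
        rcases Nat.eq_zero_or_pos a with rfl | hapos
        · exact Or.inl hv0
        · refine Or.inr ⟨ℓ (a-1), Finset.mem_univ _, ?_⟩
          have := htgt (a-1) (by omega)
          rwa [show a - 1 + 1 = a by omega] at this
    · rintro (rfl | ⟨i, -, hwF⟩)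
      · rcases Nat.eq_zero_or_pos m with hm0 | hmpos
        · refine ⟨istar, Finset.mem_univ _, ?_⟩
          rw [hG]
          apply Finset.mem_union_left
          rw [Finset.mem_sdiff]
          have hwm : v m = w := by rw [hm0]; exact hv0
          constructor
          · rw [hBco istar, if_pos rfl, ← hwm]
            exact Finset.mem_insert_self _ _
          · rw [← hwm]
            exact hvmY
        · refine ⟨ℓ 0, Finset.mem_univ _, ?_⟩
          rw [hG]
          apply Finset.mem_union_right
          rw [← hv0]
          exact hsrc 0 hmpos
      · by_cases hwY : w ∈ Ys i
        · obtain ⟨a, ham, hai, rfl⟩ := hmemYs hwY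
          by_cases ha1 : a + 1 < m
          · refine ⟨ℓ (a+1), Finset.mem_univ _, ?_⟩
            rw [hG]
            exact Finset.mem_union_right _ (hsrc (a+1) ha1)
          · have hm1 : a + 1 = m := by omega
            refine ⟨istar, Finset.mem_univ _, ?_⟩
            rw [hG]
            apply Finset.mem_union_left
            rw [Finset.mem_sdiff, hm1]
            refine ⟨?_, hvmY⟩
            rw [hBco istar, if_pos rfl]
            exact Finset.mem_insert_self _ _
        · refine ⟨i, Finset.mem_univ _, ?_⟩
          rw [hG]
          exact Finset.mem_union_left _ (Finset.mem_sdiff.2 ⟨hFB i hwF, hwY⟩)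
  exact ⟨G, hGind, hGdisj, hGunion⟩

/-- Iterating the augmentation lemma: a full cover by `k` independent sets exists. -/
lemma cover_all (hM : IsMatroid Indep)
    (hcond : ∀ S : Finset V, S.Nonempty → S.card ≤ k * rnk Indep S) :
    ∃ F : Fin k → Finset V, (∀ i, Indep (F i)) ∧
      Finset.univ.biUnion F = Finset.univ := by
  have key : ∀ d (F : Fin k → Finset V), (∀ i, Indep (F i)) →
      (∀ i j : Fin k, ∀ w, w ∈ F i → w ∈ F j → i = j) →
      (Finset.univ \ Finset.univ.biUnion F).card ≤ d →
      ∃ F' : Fin k → Finset V, (∀ i, Indep (F' i)) ∧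
        Finset.univ.biUnion F' = Finset.univ := by
    intro d
    induction d with
    | zero =>
      intro F hind hdisj hcard
      refine ⟨F, hind, ?_⟩
      have : Finset.univ \ Finset.univ.biUnion F = ∅ :=
        Finset.card_eq_zero.1 (by omega)
      have hsub : (Finset.univ : Finset V) ⊆ Finset.univ.biUnion F := by
        intro w hw
        by_contra hmem
        have : w ∈ Finset.univ \ Finset.univ.biUnion F := Finset.mem_sdiff.2 ⟨hw, hmem⟩
        rw [‹Finset.univ \ Finset.univ.biUnion F = ∅›] at this
        exact absurd this (Finset.notMem_empty w)
      exact le_antisymm (Finset.subset_univ _) hsub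
    | succ d ih =>
      intro F hind hdisj hcard
      rcases Finset.eq_empty_or_nonempty (Finset.univ \ Finset.univ.biUnion F) with
        hemp | ⟨t, htmem⟩
      · refine ⟨F, hind, ?_⟩
        apply le_antisymm (Finset.subset_univ _)
        intro w hw
        by_contra hmem
        have : w ∈ Finset.univ \ Finset.univ.biUnion F := Finset.mem_sdiff.2 ⟨hw, hmem⟩
        rw [hemp] at this
        exact absurd this (Finset.notMem_empty w)
      · have htF : ∀ i, t ∉ F i := by
          intro i hti
          have : t ∈ Finset.univ.biUnion F :=
            Finset.mem_biUnion.2 ⟨i, Finset.mem_univ i, hti⟩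
          exact (Finset.mem_sdiff.1 htmem).2 this
        obtain ⟨G, hGind, hGdisj, hGunion⟩ := aug Indep hM F hind hdisj hcond t htF
        apply ih G hGind hGdisj
        have hsub : Finset.univ \ Finset.univ.biUnion G ⊆
            (Finset.univ \ Finset.univ.biUnion F).erase t := by
          intro w hw
          rw [Finset.mem_sdiff] at hw
          rw [hGunion] at hw
          refine Finset.mem_erase.2 ⟨?_, Finset.mem_sdiff.2 ⟨hw.1, ?_⟩⟩
          · intro h
            exact hw.2 (by rw [h]; exact Finset.mem_insert_self t _)
          · intro h
            exact hw.2 (Finset.mem_insert_of_mem h)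
        calc (Finset.univ \ Finset.univ.biUnion G).card
            ≤ ((Finset.univ \ Finset.univ.biUnion F).erase t).card :=
              Finset.card_le_card hsub
          _ = (Finset.univ \ Finset.univ.biUnion F).card - 1 := by
              rw [Finset.card_erase_of_mem htmem]
          _ ≤ d := by omega
  exact key (Fintype.card V) (fun _ => ∅) (fun _ => hM.1)
    (fun i j w hw => absurd hw (Finset.notMem_empty w))
    ((Finset.card_le_card (Finset.subset_univ _)).trans (by simp))

lemma rnk_pos (hL : Loopless Indep) {S : Finset V} (hS : S.Nonempty) :
    1 ≤ rnk Indep S := by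
  obtain ⟨a, ha⟩ := hS
  have := card_le_rnk Indep (hL a) (Finset.singleton_subset_iff.2 ha)
  simpa using this

end EdmondsAux

/-- Edmonds' theorem: for a matroid, the edge covering number equals `⌈ζ⌉`. -/
theorem stmt0 [Nonempty V] (Indep : Finset V → Prop)
    (hM : IsMatroid Indep) (hL : Loopless Indep) :
    beta Indep = ⌈zeta Indep⌉₊ := by
  classical
  set R : Set ℝ :=
    {x : ℝ | ∃ S : Finset V, S.Nonempty ∧ x = (S.card : ℝ) / (rnk Indep S : ℝ)} with hR
  have hzeta : zeta Indep = sSup R := rfl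
  obtain ⟨v0⟩ := ‹Nonempty V›
  have hRne : R.Nonempty :=
    ⟨(({v0} : Finset V).card : ℝ) / (rnk Indep {v0} : ℝ),
      ⟨{v0}, Finset.singleton_nonempty v0, rfl⟩⟩
  have hrpos : ∀ S : Finset V, S.Nonempty → (0 : ℝ) < (rnk Indep S : ℝ) := by
    intro S hS
    have := EdmondsAux.rnk_pos Indep hL hS
    exact_mod_cast this
  have hbdd : BddAbove R := by
    refine ⟨(Fintype.card V : ℝ), ?_⟩
    rintro x ⟨S, hS, rfl⟩
    have h1 : (1 : ℝ) ≤ (rnk Indep S : ℝ) := by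
      exact_mod_cast EdmondsAux.rnk_pos Indep hL hS
    have h2 : (S.card : ℝ) ≤ (Fintype.card V : ℝ) := by
      exact_mod_cast Finset.card_le_univ S
    exact (div_le_self (by positivity) h1).trans h2
  set k₀ := ⌈zeta Indep⌉₊ with hk0
  have hcond : ∀ S : Finset V, S.Nonempty → S.card ≤ k₀ * rnk Indep S := by
    intro S hS
    have hx : (S.card : ℝ) / (rnk Indep S : ℝ) ≤ zeta Indep := by
      rw [hzeta]
      exact le_csSup hbdd ⟨S, hS, rfl⟩
    have hz : zeta Indep ≤ (k₀ : ℝ) := Nat.le_ceil _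
    have hd := hrpos S hS
    have hmain : (S.card : ℝ) ≤ (k₀ : ℝ) * (rnk Indep S : ℝ) := by
      rw [div_le_iff₀ hd] at hx
      calc (S.card : ℝ) ≤ zeta Indep * (rnk Indep S : ℝ) := hx
      _ ≤ (k₀ : ℝ) * (rnk Indep S : ℝ) :=
        mul_le_mul_of_nonneg_right hz (le_of_lt hd)
    exact_mod_cast hmain
  obtain ⟨F, hFind, hFcover⟩ := EdmondsAux.cover_all Indep hM hcond
  set Bset : Set ℕ := {k : ℕ | ∃ F : Finset (Finset V), (∀ e ∈ F, Indep e) ∧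
    (∀ v : V, ∃ e ∈ F, v ∈ e) ∧ F.card = k} with hBset
  have hbeta : beta Indep = sInf Bset := rfl
  have hmem : (Finset.univ.image F).card ∈ Bset := by
    refine ⟨Finset.univ.image F, ?_, ?_, rfl⟩
    · intro e he
      obtain ⟨i, -, rfl⟩ := Finset.mem_image.1 he
      exact hFind i
    · intro w
      have hw : w ∈ Finset.univ.biUnion F := by
        rw [hFcover]; exact Finset.mem_univ w
      obtain ⟨i, -, hwi⟩ := Finset.mem_biUnion.1 hw
      exact ⟨F i, Finset.mem_image_of_mem F (Finset.mem_univ i), hwi⟩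
  have hble : beta Indep ≤ k₀ := by
    have h1 : sInf Bset ≤ (Finset.univ.image F).card := Nat.sInf_le hmem
    have h2 : (Finset.univ.image F).card ≤ k₀ := by
      calc (Finset.univ.image F).card ≤ (Finset.univ : Finset (Fin k₀)).card :=
        Finset.card_image_le
      _ = k₀ := by simp
    omega
  have hbmem : beta Indep ∈ Bset := by
    rw [hbeta]
    exact Nat.sInf_mem ⟨_, hmem⟩
  obtain ⟨F₀, hF₀ind, hF₀cov, hF₀card⟩ := hbmem
  have hge : k₀ ≤ beta Indep := by
    rw [hk0]
    apply Nat.ceil_le.2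
    rw [hzeta]
    apply csSup_le hRne
    rintro x ⟨S, hS, rfl⟩
    have hsub : S ⊆ F₀.biUnion (fun e => e ∩ S) := by
      intro w hw
      obtain ⟨e, he, hwe⟩ := hF₀cov w
      exact Finset.mem_biUnion.2 ⟨e, he, Finset.mem_inter.2 ⟨hwe, hw⟩⟩
    have hcount : S.card ≤ F₀.card * rnk Indep S := by
      calc S.card ≤ (F₀.biUnion (fun e => e ∩ S)).card := Finset.card_le_card hsub
      _ ≤ ∑ e ∈ F₀, (e ∩ S).card := Finset.card_biUnion_le
      _ ≤ ∑ _e ∈ F₀, rnk Indep S := Finset.sum_le_sum (fun e he =>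
          EdmondsAux.card_le_rnk Indep
            (hM.2.1 (hF₀ind e he) Finset.inter_subset_left) Finset.inter_subset_right)
      _ = F₀.card * rnk Indep S := by rw [Finset.sum_const, smul_eq_mul]
    have hd := hrpos S hS
    rw [div_le_iff₀ hd]
    have hfin : (S.card : ℝ) ≤ (F₀.card : ℝ) * (rnk Indep S : ℝ) := by
      exact_mod_cast hcount
    rw [hF₀card] at hfin
    exact hfin
  omega
end

section
/- For a bipartite graph G, the minimal number of matchings needed to cover all edges of G equals the maximal degree Δ(G). -/
/-!
The edges are coloured with `Δ` colours one at a time. To colour `uv`, pick a colour `a` missing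
at `u` and `b` missing at `v`, and swap `a` and `b` on the component of `v` in the subgraph of
edges coloured `a` or `b` (a Kempe chain). Colours alternate along paths of that subgraph, so a
path in it from `v` to `u`, which starts with colour `a` and ends with colour `b`, has even
length; but in a bipartite graph every walk from `v` to its neighbour `u` is odd. Hence `u` is
untouched, `a` becomes missing at both ends, and `uv` receives `a`. The colour classes are then
`Δ` matchings, and no fewer suffice because the edges at a vertex of maximal degree lie in
distinct matchings.
-/

open Finset

def IsMatchingSet {V : Type*} (G : SimpleGraph V) (m : Finset (Sym2 V)) : Prop :=
  (∀ e ∈ m, e ∈ G.edgeSet) ∧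
    ∀ e ∈ m, ∀ f ∈ m, e ≠ f → ∀ v : V, ¬(v ∈ e ∧ v ∈ f)

theorem Finset.exists_lt_forall_ne_of_card_lt {α : Type*} {s : Finset α} {k : ℕ} (f : α → ℕ)
    (hs : #s < k) : ∃ a < k, ∀ x ∈ s, f x ≠ a := by
  by_contra! h
  have hsub : range k ⊆ s.image f := fun a ha => by
    obtain ⟨x, hx, rfl⟩ := h a (mem_range.mp ha)
    exact mem_image_of_mem f hx
  have := (card_le_card hsub).trans card_image_le
  rw [card_range] at this
  omega

namespace SimpleGraph

variable {V : Type*} {G H : SimpleGraph V}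

theorem Colorable.odd_length_of_adj (hG : G.Colorable 2) {u v : V} (huv : G.Adj u v)
    (p : G.Walk v u) : Odd p.length := by
  have := two_colorable_iff_forall_loop_even.mp hG v (p.concat huv)
  rwa [Walk.length_concat, Nat.even_add_one, Nat.not_even_iff_odd] at this

def IsProperEdgeColoring {α : Type*} (G : SimpleGraph V) (c : Sym2 V → α) : Prop :=
  ∀ ⦃x y z⦄, G.Adj x y → G.Adj x z → y ≠ z → c s(x, y) ≠ c s(x, z)

def IsMissingColor {α : Type*} (G : SimpleGraph V) (c : Sym2 V → α) (x : V) (a : α) : Prop :=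
  ∀ ⦃w⦄, G.Adj x w → c s(x, w) ≠ a

section Kempe

variable {c : Sym2 V → ℕ} {a b : ℕ} {u v : V}

def kempeGraph (G : SimpleGraph V) (c : Sym2 V → ℕ) (a b : ℕ) : SimpleGraph V where
  Adj x y := G.Adj x y ∧ (c s(x, y) = a ∨ c s(x, y) = b)
  symm := ⟨fun x y h => by rwa [G.adj_comm, Sym2.eq_swap]⟩
  loopless := ⟨fun x h => G.loopless.irrefl x h.1⟩

@[simp]
theorem kempeGraph_adj {x y : V} :
    (G.kempeGraph c a b).Adj x y ↔ G.Adj x y ∧ (c s(x, y) = a ∨ c s(x, y) = b) :=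
  Iff.rfl

theorem kempeGraph_le : G.kempeGraph c a b ≤ G := fun _ _ h => h.1

theorem kempeGraph_color_of_isPath (hc : G.IsProperEdgeColoring c)
    (hv : G.IsMissingColor c v b) {x y : V} (h : (G.kempeGraph c a b).Adj x y)
    (q : (G.kempeGraph c a b).Walk y v) (hp : (Walk.cons h q).IsPath) :
    c s(x, y) = if Even q.length then a else b := by
  induction q generalizing x with
  | @nil v =>
    have hxv : c s(x, v) ≠ b := by rw [Sym2.eq_swap]; exact hv h.1.symm
    simpa [hxv] using h.2
  | @cons y z w h' q ih =>
    have hyz := ih hv h' hp.of_cons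
    have hxz : x ≠ z := fun hxz => by
      subst hxz
      exact ((Walk.cons_isPath_iff _ _).mp hp).2 (by simp)
    have hne : c s(x, y) ≠ c s(y, z) := by
      rw [Sym2.eq_swap]; exact hc h.1.symm h'.1 hxz
    simp only [Walk.length_cons, Nat.even_add_one]
    split_ifs at hyz ⊢ <;> rcases h.2 with h2 | h2 <;> simp_all

theorem not_reachable_kempeGraph (hc : G.IsProperEdgeColoring c)
    (hu : G.IsMissingColor c u a) (hv : G.IsMissingColor c v b)
    (hodd : ∀ p : G.Walk v u, Odd p.length) : ¬(G.kempeGraph c a b).Reachable u v := by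
  intro hr
  obtain ⟨p, hp⟩ := hr.exists_isPath
  cases p with
  | nil => exact Nat.not_odd_zero (hodd Walk.nil)
  | @cons _ y _ h q =>
    have hq : Even q.length := by
      simpa [Nat.odd_add_one] using hodd ((Walk.cons h q).reverse.mapLe kempeGraph_le)
    have := kempeGraph_color_of_isPath hc hv h q hp
    rw [if_pos hq] at this
    exact hu h.1 this

open Classical in
noncomputable def kempeSwap (G : SimpleGraph V) (c : Sym2 V → ℕ) (a b : ℕ) (v : V) :
    Sym2 V → ℕ := fun e =>
  if ∃ x ∈ e, (G.kempeGraph c a b).Reachable v x then Equiv.swap a b (c e) else c e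

theorem kempeSwap_of_reachable {x y : V} (hx : (G.kempeGraph c a b).Reachable v x) :
    G.kempeSwap c a b v s(x, y) = Equiv.swap a b (c s(x, y)) :=
  if_pos ⟨x, Sym2.mem_mk_left x y, hx⟩

theorem kempeSwap_of_not_reachable {x y : V} (hxy : G.Adj x y)
    (hx : ¬(G.kempeGraph c a b).Reachable v x) : G.kempeSwap c a b v s(x, y) = c s(x, y) := by
  by_cases hy : (G.kempeGraph c a b).Reachable v y
  · have hab : c s(x, y) ≠ a ∧ c s(x, y) ≠ b := by
      by_contra hab
      exact hx (hy.trans (Adj.reachable ⟨hxy.symm, by rw [Sym2.eq_swap]; tauto⟩))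
    rw [Sym2.eq_swap, kempeSwap_of_reachable hy, Sym2.eq_swap,
      Equiv.swap_apply_of_ne_of_ne hab.1 hab.2]
  · simp [kempeSwap, hx, hy]

theorem isProperEdgeColoring_kempeSwap (hc : G.IsProperEdgeColoring c) :
    G.IsProperEdgeColoring (G.kempeSwap c a b v) := by
  intro x y z hxy hxz hyz
  by_cases hx : (G.kempeGraph c a b).Reachable v x
  · rw [kempeSwap_of_reachable hx, kempeSwap_of_reachable hx]
    exact (Equiv.swap a b).injective.ne (hc hxy hxz hyz)
  · rw [kempeSwap_of_not_reachable hxy hx, kempeSwap_of_not_reachable hxz hx]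
    exact hc hxy hxz hyz

theorem kempeSwap_lt {k : ℕ} (hk : ∀ e ∈ G.edgeSet, c e < k) (ha : a < k) (hb : b < k) :
    ∀ e ∈ G.edgeSet, G.kempeSwap c a b v e < k := by
  intro e he
  have := hk e he
  unfold kempeSwap
  split_ifs
  · rw [Equiv.swap_apply_def]
    split_ifs <;> assumption
  · assumption

theorem isMissingColor_kempeSwap_self (hv : G.IsMissingColor c v b) :
    G.IsMissingColor (G.kempeSwap c a b v) v a := fun w hw => by
  rw [kempeSwap_of_reachable Reachable.rfl, ne_eq, Equiv.swap_apply_eq_iff,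
    Equiv.swap_apply_left]
  exact hv hw

theorem isMissingColor_kempeSwap_of_not_reachable (hu : G.IsMissingColor c u a)
    (hvu : ¬(G.kempeGraph c a b).Reachable v u) :
    G.IsMissingColor (G.kempeSwap c a b v) u a := fun w hw => by
  rw [kempeSwap_of_not_reachable hw hvu]
  exact hu hw

theorem IsProperEdgeColoring.exists_isMissingColor_of_odd {k : ℕ}
    (hc : G.IsProperEdgeColoring c) (hk : ∀ e ∈ G.edgeSet, c e < k) (ha : a < k) (hb : b < k)
    (hu : G.IsMissingColor c u a) (hv : G.IsMissingColor c v b)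
    (hodd : ∀ p : G.Walk v u, Odd p.length) :
    ∃ c' : Sym2 V → ℕ, G.IsProperEdgeColoring c' ∧ (∀ e ∈ G.edgeSet, c' e < k) ∧
      G.IsMissingColor c' u a ∧ G.IsMissingColor c' v a :=
  ⟨G.kempeSwap c a b v, isProperEdgeColoring_kempeSwap hc, kempeSwap_lt hk ha hb,
    isMissingColor_kempeSwap_of_not_reachable hu
      fun h => not_reachable_kempeGraph hc hu hv hodd h.symm,
    isMissingColor_kempeSwap_self hv⟩

end Kempe

theorem IsProperEdgeColoring.update_of_deleteEdges [DecidableEq V] {α : Type*}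
    {c : Sym2 V → α} {a : α} {u v : V}
    (hc : (G.deleteEdges {s(u, v)}).IsProperEdgeColoring c)
    (hu : (G.deleteEdges {s(u, v)}).IsMissingColor c u a)
    (hv : (G.deleteEdges {s(u, v)}).IsMissingColor c v a) :
    G.IsProperEdgeColoring (Function.update c s(u, v) a) := by
  have key : ∀ ⦃x y z⦄, G.Adj x z → y ≠ z → s(x, y) = s(u, v) → a ≠ c s(x, z) := by
    intro x y z hxz hyz hxy
    have hxz' : (G.deleteEdges {s(u, v)}).Adj x z :=
      deleteEdges_adj.mpr ⟨hxz, fun h => hyz (Sym2.congr_right.mp (hxy.trans h.symm))⟩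
    rcases Sym2.eq_iff.mp hxy with ⟨rfl, -⟩ | ⟨rfl, -⟩
    · exact (hu hxz').symm
    · exact (hv hxz').symm
  intro x y z hxy hxz hyz
  by_cases hy : s(x, y) = s(u, v) <;> by_cases hz : s(x, z) = s(u, v)
  · exact absurd (Sym2.congr_right.mp (hy.trans hz.symm)) hyz
  · simpa [hy, hz] using key hxz hyz hy
  · simpa [hy, hz] using (key hxy hyz.symm hz).symm
  · simp only [Function.update_of_ne hy, Function.update_of_ne hz]
    exact hc (deleteEdges_adj.mpr ⟨hxy, hy⟩) (deleteEdges_adj.mpr ⟨hxz, hz⟩) hyz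

theorem exists_isMissingColor_deleteEdges [Fintype V] [DecidableRel G.Adj] {k : ℕ} {u v : V}
    (hHG : H ≤ G) (huv : H.Adj u v) (hdeg : G.degree u ≤ k) (c : Sym2 V → ℕ) :
    ∃ a < k, (H.deleteEdges {s(u, v)}).IsMissingColor c u a := by
  classical
  have hv : v ∈ G.neighborFinset u := (mem_neighborFinset _ _ _).mpr (hHG huv)
  have hcard : #((G.neighborFinset u).erase v) < k := by
    rw [card_erase_of_mem hv, card_neighborFinset_eq_degree]
    have := (G.degree_pos_iff_exists_adj u).mpr ⟨v, hHG huv⟩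
    omega
  obtain ⟨a, ha, hmiss⟩ := exists_lt_forall_ne_of_card_lt (fun w => c s(u, w)) hcard
  refine ⟨a, ha, fun w hw => hmiss w ?_⟩
  rw [deleteEdges_adj] at hw
  exact mem_erase.mpr ⟨fun h => hw.2 (by rw [h]; rfl), (mem_neighborFinset _ _ _).mpr (hHG hw.1)⟩

theorem Colorable.exists_isProperEdgeColoring_of_degree_le [Fintype V] [DecidableRel G.Adj]
    {k : ℕ} (hG : G.Colorable 2) (hdeg : ∀ v, G.degree v ≤ k) :
    ∃ c : Sym2 V → ℕ, G.IsProperEdgeColoring c ∧ ∀ e ∈ G.edgeSet, c e < k := by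
  classical
  suffices ∀ H ≤ G, ∃ c : Sym2 V → ℕ, H.IsProperEdgeColoring c ∧ ∀ e ∈ H.edgeSet, c e < k from
    this G le_rfl
  intro H
  induction H using WellFoundedLT.induction with
  | _ H ih =>
  intro hHG
  by_cases hH : H = ⊥
  · subst hH
    exact ⟨0, fun _ _ _ h => h.elim, by simp⟩
  obtain ⟨u, v, huv⟩ := ne_bot_iff_exists_adj.mp hH
  set H' := H.deleteEdges {s(u, v)}
  have hH'H : H' < H := (deleteEdges_le _).lt_of_not_ge fun h => by simpa [H'] using h huv
  obtain ⟨c, hc, hk⟩ := ih H' hH'H (hH'H.le.trans hHG)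
  obtain ⟨a, ha, hua⟩ := exists_isMissingColor_deleteEdges hHG huv (hdeg u) c
  obtain ⟨b, hb, hvb⟩ := exists_isMissingColor_deleteEdges hHG huv.symm (hdeg v) c
  rw [Sym2.eq_swap] at hvb
  have hodd (p : H'.Walk v u) : Odd p.length := by
    simpa using (hG.mono_left hHG).odd_length_of_adj huv (p.mapLe hH'H.le)
  obtain ⟨c', hc', hk', hua', hva'⟩ := hc.exists_isMissingColor_of_odd hk ha hb hua hvb hodd
  refine ⟨Function.update c' s(u, v) a, hc'.update_of_deleteEdges hua' hva', fun e he => ?_⟩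
  by_cases he' : e = s(u, v)
  · simpa [he'] using ha
  · simpa [he'] using hk' e (by simp [H', he, he'])

theorem IsProperEdgeColoring.isMatchingSet_filter [Fintype G.edgeSet] {α : Type*}
    [DecidableEq α] {c : Sym2 V → α} (hc : G.IsProperEdgeColoring c) (i : α) :
    IsMatchingSet G (G.edgeFinset.filter (c · = i)) := by
  refine ⟨fun e he => mem_edgeFinset.mp (mem_filter.mp he).1, ?_⟩
  rintro e he f hf hef x ⟨hxe, hxf⟩
  obtain ⟨heG, rfl⟩ := mem_filter.mp he
  obtain ⟨hfG, hcf⟩ := mem_filter.mp hf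
  obtain ⟨y, rfl⟩ := Sym2.mem_iff_exists.mp hxe
  obtain ⟨z, rfl⟩ := Sym2.mem_iff_exists.mp hxf
  rw [mem_edgeFinset, mem_edgeSet] at heG hfG
  exact hc heG hfG (fun h => hef (by rw [h])) hcf.symm

theorem IsProperEdgeColoring.exists_matchingCover [Fintype G.edgeSet] {c : Sym2 V → ℕ} {k : ℕ}
    (hc : G.IsProperEdgeColoring c) (hk : ∀ e ∈ G.edgeSet, c e < k) :
    ∃ F : Finset (Finset (Sym2 V)), (∀ m ∈ F, IsMatchingSet G m) ∧
      (∀ e ∈ G.edgeSet, ∃ m ∈ F, e ∈ m) ∧ #F ≤ k := by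
  classical
  refine ⟨(range k).image fun i => G.edgeFinset.filter (c · = i), ?_, ?_,
    card_image_le.trans (card_range k).le⟩
  · simp only [mem_image]
    rintro _ ⟨i, -, rfl⟩
    exact hc.isMatchingSet_filter i
  · intro e he
    exact ⟨_, mem_image_of_mem _ (mem_range.mpr (hk e he)),
      mem_filter.mpr ⟨mem_edgeFinset.mpr he, rfl⟩⟩

theorem degree_le_card_of_matchingCover [Fintype V] [DecidableRel G.Adj]
    {F : Finset (Finset (Sym2 V))} (hF : ∀ m ∈ F, IsMatchingSet G m)
    (hcov : ∀ e ∈ G.edgeSet, ∃ m ∈ F, e ∈ m) (v : V) : G.degree v ≤ #F := by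
  choose! g hgF hg using hcov
  rw [← card_neighborFinset_eq_degree]
  refine card_le_card_of_injOn (fun w => g s(v, w))
    (fun w hw => hgF _ ((mem_neighborFinset _ _ _).mp hw)) fun w₁ hw₁ w₂ hw₂ heq => ?_
  rw [mem_coe, mem_neighborFinset] at hw₁ hw₂
  by_contra hne
  have hw₂' : s(v, w₂) ∈ g s(v, w₁) := by
    rw [show g s(v, w₁) = g s(v, w₂) from heq]
    exact hg _ hw₂
  exact (hF _ (hgF _ hw₁)).2 _ (hg _ hw₁) _ hw₂' (fun h => hne (Sym2.congr_right.mp h)) v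
    ⟨Sym2.mem_mk_left _ _, Sym2.mem_mk_left _ _⟩

end SimpleGraph

theorem stmt1_general {V : Type*} [Fintype V] (G : SimpleGraph V)
    [DecidableRel G.Adj] (hbip : G.Colorable 2) :
    sInf {k : ℕ | ∃ F : Finset (Finset (Sym2 V)), (∀ m ∈ F, IsMatchingSet G m) ∧
        (∀ e ∈ G.edgeSet, ∃ m ∈ F, e ∈ m) ∧ F.card = k} = G.maxDegree := by
  obtain ⟨c, hc, hk⟩ := hbip.exists_isProperEdgeColoring_of_degree_le G.degree_le_maxDegree
  obtain ⟨F, hF, hcov, hcard⟩ := hc.exists_matchingCover hk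
  apply le_antisymm
  · exact le_trans (Nat.sInf_le ⟨F, hF, hcov, rfl⟩) hcard
  refine le_csInf ⟨#F, F, hF, hcov, rfl⟩ ?_
  rintro _ ⟨F', hF', hcov', rfl⟩
  exact G.maxDegree_le_of_forall_degree_le _
    (SimpleGraph.degree_le_card_of_matchingCover hF' hcov')

/-- König's edge coloring theorem: for a bipartite graph the minimal number of
matchings covering all edges equals the maximal degree. -/
theorem stmt1 {V : Type*} [Fintype V] [DecidableEq V] (G : SimpleGraph V)
    [DecidableRel G.Adj] (hbip : G.Colorable 2) (hne : G.edgeSet.Nonempty) :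
    sInf {k : ℕ | ∃ F : Finset (Finset (Sym2 V)), (∀ m ∈ F, IsMatchingSet G m) ∧
        (∀ e ∈ G.edgeSet, ∃ m ∈ F, e ∈ m) ∧ F.card = k} = G.maxDegree :=
  stmt1_general G hbip
end

section
/- If M is a matroid, then for every partition A₁, …, A_m of the ground set V there exists an independent set S of M such that |S ∩ A_i| ≥ ⌊|A_i| / ζ(M)⌋ for every i. -/
open Finset

variable {V : Type*} [Fintype V] [DecidableEq V]

open scoped Classical

variable {Indep : Finset V → Prop}

lemma le_rnk_of (hR : Indep R) (hsub : R ⊆ S) : R.card ≤ rnk Indep S := by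
  apply Finset.le_sup
  simp [Finset.mem_filter, Finset.mem_powerset, hR, hsub]

lemma exists_indep_card_rnk (hM : IsMatroid Indep) (S : Finset V) :
    ∃ R, R ⊆ S ∧ Indep R ∧ R.card = rnk Indep S := by
  have hne : (S.powerset.filter (fun e => Indep e)).Nonempty :=
    ⟨∅, by simp [hM.1]⟩
  obtain ⟨R, hR, hcard⟩ := Finset.exists_mem_eq_sup _ hne Finset.card
  simp only [Finset.mem_filter, Finset.mem_powerset] at hR
  exact ⟨R, hR.1, hR.2, hcard.symm⟩

lemma rnk_le_card (S : Finset V) : rnk Indep S ≤ S.card := by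
  apply Finset.sup_le
  intro e he
  simp only [Finset.mem_filter, Finset.mem_powerset] at he
  exact Finset.card_le_card he.1

lemma rnk_mono (h : S ⊆ T) : rnk Indep S ≤ rnk Indep T := by
  apply Finset.sup_le
  intro e he
  simp only [Finset.mem_filter, Finset.mem_powerset] at he
  exact Finset.le_sup (by simp [Finset.mem_filter, Finset.mem_powerset, he.1.trans h, he.2])

lemma indep_of_rnk_eq_card (hM : IsMatroid Indep) (h : rnk Indep S = S.card) : Indep S := by
  obtain ⟨R, hsub, hind, hcard⟩ := exists_indep_card_rnk hM S
  rwa [Finset.eq_of_subset_of_card_le hsub (by omega)] at hind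

set_option linter.unusedSectionVars false

lemma exists_extend (hM : IsMatroid Indep) (hB : Indep B) (hsub : B ⊆ T) :
    ∃ B', B ⊆ B' ∧ B' ⊆ T ∧ Indep B' ∧ B'.card = rnk Indep T := by
  obtain ⟨R, hRsub, hRind, hRcard⟩ := exists_indep_card_rnk hM T
  have hBle : B.card ≤ rnk Indep T := le_rnk_of hB hsub
  -- induct on rnk T - B.card
  obtain ⟨k, hk⟩ : ∃ k, rnk Indep T - B.card = k := ⟨_, rfl⟩
  induction k generalizing B with
  | zero =>
    exact ⟨B, Finset.Subset.refl _, hsub, hB, by omega⟩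
  | succ k ih =>
    have hlt : B.card < R.card := by omega
    obtain ⟨x, hxR, hxB, hins⟩ := hM.2.2 hB hRind hlt
    have hsub' : insert x B ⊆ T := Finset.insert_subset (hRsub hxR) hsub
    have hcard' : (insert x B).card = B.card + 1 := Finset.card_insert_of_notMem hxB
    obtain ⟨B', h1, h2, h3, h4⟩ := ih hins hsub' (by omega) (by omega)
    exact ⟨B', (Finset.subset_insert _ _).trans h1, h2, h3, h4⟩

lemma rnk_submodular (hM : IsMatroid Indep) (X Y : Finset V) :
    rnk Indep (X ∪ Y) + rnk Indep (X ∩ Y) ≤ rnk Indep X + rnk Indep Y := by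
  obtain ⟨B, hBsub, hBind, hBcard⟩ := exists_indep_card_rnk hM (X ∩ Y)
  obtain ⟨C, hBC, hCsub, hCind, hCcard⟩ :=
    exists_extend hM hBind (hBsub.trans Finset.inter_subset_union)
  have h1 : (C ∩ X).card ≤ rnk Indep X := le_rnk_of (hM.2.1 hCind Finset.inter_subset_left) Finset.inter_subset_right
  have h2 : (C ∩ Y).card ≤ rnk Indep Y := le_rnk_of (hM.2.1 hCind Finset.inter_subset_left) Finset.inter_subset_right
  have key : (C ∩ X).card + (C ∩ Y).card = (C ∩ (X ∪ Y)).card + (C ∩ (X ∩ Y)).card := by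
    rw [Finset.inter_union_distrib_left, Finset.inter_inter_distrib_left]
    rw [add_comm ((C ∩ X ∪ C ∩ Y).card)]
    exact (Finset.card_inter_add_card_union _ _).symm
  have hCX : (C ∩ (X ∪ Y)).card = rnk Indep (X ∪ Y) := by
    rw [Finset.inter_eq_left.2 hCsub, hCcard]
  have hBle : rnk Indep (X ∩ Y) ≤ (C ∩ (X ∩ Y)).card :=
    hBcard ▸ Finset.card_le_card (Finset.subset_inter hBC hBsub)
  omega

lemma rnk_erase (hM : IsMatroid Indep) (T : Finset V) (x : V) :
    rnk Indep T ≤ rnk Indep (T.erase x) + 1 := by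
  obtain ⟨R, hRsub, hRind, hRcard⟩ := exists_indep_card_rnk hM T
  have h1 : (R.erase x).card ≤ rnk Indep (T.erase x) :=
    le_rnk_of (hM.2.1 hRind (Finset.erase_subset _ _)) (Finset.erase_subset_erase _ hRsub)
  have h2 : R.card ≤ (R.erase x).card + 1 := by
    by_cases h : x ∈ R
    · rw [Finset.card_erase_of_mem h]; omega
    · rw [Finset.erase_eq_of_notMem h]; omega
  omega

lemma erase_biUnion_update {ι : Type*} [DecidableEq ι] {B : ι → Finset V} 
    (hdisj : ∀ i j, i ≠ j → Disjoint (B i) (B j)) {i : ι} {I : Finset ι} (hiI : i ∈ I)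
    {x : V} (hx : x ∈ B i) :
    I.biUnion (Function.update B i ((B i).erase x)) = (I.biUnion B).erase x := by
  ext z
  simp only [Finset.mem_biUnion, Finset.mem_erase]
  constructor
  · rintro ⟨j, hj, hz⟩
    by_cases hji : j = i
    · subst hji
      rw [Function.update_self] at hz
      rw [Finset.mem_erase] at hz
      exact ⟨hz.1, j, hj, hz.2⟩
    · rw [Function.update_of_ne hji] at hz
      refine ⟨?_, j, hj, hz⟩
      intro hzx; subst hzx
      exact Finset.disjoint_left.mp (hdisj j i hji) hz hx
  · rintro ⟨hzx, j, hj, hz⟩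
    by_cases hji : j = i
    · subst hji
      exact ⟨j, hj, by rw [Function.update_self, Finset.mem_erase]; exact ⟨hzx, hz⟩⟩
    · exact ⟨j, hj, by rw [Function.update_of_ne hji]; exact hz⟩

lemma rado_unit {ι : Type*} [Fintype ι] [DecidableEq ι] (hM : IsMatroid Indep)
    (B : ι → Finset V) (hdisj : ∀ i j, i ≠ j → Disjoint (B i) (B j))
    (hcond : ∀ I : Finset ι, I.card ≤ rnk Indep (I.biUnion B)) :
    ∃ S, Indep S ∧ ∀ i, (S ∩ B i).Nonempty := by
  obtain ⟨n, hn⟩ : ∃ n, (∑ i, (B i).card) = n := ⟨_, rfl⟩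
  induction n using Nat.strong_induction_on generalizing B with
  | _ n ih =>
  by_cases hall : ∀ i, (B i).card ≤ 1
  · -- base case: all parts are singletons
    have hone : ∀ i, (B i).card = 1 := by
      intro i
      have h1 := hcond {i}
      simp only [Finset.card_singleton, Finset.singleton_biUnion] at h1
      have := rnk_le_card (Indep := Indep) (B i)
      have := hall i; omega
    set U := (Finset.univ : Finset ι).biUnion B with hU
    have hcardU : U.card = Fintype.card ι := by
      rw [hU, Finset.card_biUnion (fun i _ j _ hij => hdisj i j hij)]
      simp [hone, Finset.card_univ]
    have hrnkU : rnk Indep U = U.card := by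
      have h1 := hcond Finset.univ
      have h2 := rnk_le_card (Indep := Indep) U
      rw [Finset.card_univ, ← hU] at h1
      omega
    refine ⟨U, indep_of_rnk_eq_card hM hrnkU, fun i => ?_⟩
    have hBU : B i ⊆ U := Finset.subset_biUnion_of_mem B (Finset.mem_univ i)
    have : (B i).Nonempty := Finset.card_pos.1 (by rw [hone i]; omega)
    obtain ⟨v, hv⟩ := this
    exact ⟨v, Finset.mem_inter.2 ⟨hBU hv, hv⟩⟩
  · push_neg at hall
    obtain ⟨i, hi2⟩ := hall
    have h2 : 1 < (B i).card := hi2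
    obtain ⟨x, hxB, y, hyB, hxy⟩ := Finset.one_lt_card.1 h2
    -- helper to finish given a good element to remove
    have finish : ∀ z ∈ B i,
        (∀ I : Finset ι, I.card ≤ rnk Indep (I.biUnion (Function.update B i ((B i).erase z)))) →
        ∃ S, Indep S ∧ ∀ j, (S ∩ B j).Nonempty := by
      intro z hz hcond'
      set B' := Function.update B i ((B i).erase z) with hB'
      have hsub : ∀ j, B' j ⊆ B j := by
        intro j
        by_cases hji : j = i
        · subst hji; rw [hB', Function.update_self]; exact Finset.erase_subset _ _
        · rw [hB', Function.update_of_ne hji]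
      have hdisj' : ∀ a b, a ≠ b → Disjoint (B' a) (B' b) :=
        fun a b hab => ((hdisj a b hab).mono (hsub a) (hsub b))
      have hsum : (∑ j, (B' j).card) < n := by
        rw [← hn]
        apply Finset.sum_lt_sum
        · exact fun j _ => Finset.card_le_card (hsub j)
        · refine ⟨i, Finset.mem_univ i, ?_⟩
          rw [hB', Function.update_self, Finset.card_erase_of_mem hz]
          omega
      obtain ⟨S, hS, hhit⟩ := ih _ hsum B' hdisj' hcond' rfl
      exact ⟨S, hS, fun j => (hhit j).mono (Finset.inter_subset_inter (Finset.Subset.refl S) (hsub j))⟩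
    by_cases hx : ∀ I : Finset ι, I.card ≤ rnk Indep (I.biUnion (Function.update B i ((B i).erase x)))
    · exact finish x hxB hx
    by_cases hy : ∀ I : Finset ι, I.card ≤ rnk Indep (I.biUnion (Function.update B i ((B i).erase y)))
    · exact finish y hyB hy
    exfalso
    push_neg at hx hy
    obtain ⟨I, hI⟩ := hx
    obtain ⟨J, hJ⟩ := hy
    have hiI : i ∈ I := by
      by_contra hiI
      have heq : I.biUnion (Function.update B i ((B i).erase x)) = I.biUnion B :=
        Finset.biUnion_congr rfl (fun j hj => Function.update_of_ne (by rintro rfl; exact hiI hj) _ _)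
      rw [heq] at hI
      exact absurd (hcond I) (not_le.2 hI)
    have hiJ : i ∈ J := by
      by_contra hiJ
      have heq : J.biUnion (Function.update B i ((B i).erase y)) = J.biUnion B :=
        Finset.biUnion_congr rfl (fun j hj => Function.update_of_ne (by rintro rfl; exact hiJ hj) _ _)
      rw [heq] at hJ
      exact absurd (hcond J) (not_le.2 hJ)
    rw [erase_biUnion_update hdisj hiI hxB] at hI
    rw [erase_biUnion_update hdisj hiJ hyB] at hJ
    set X := (I.biUnion B).erase x with hX
    set Y := (J.biUnion B).erase y with hY
    have hsubm := rnk_submodular hM X Y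
    have hunion : (I ∪ J).biUnion B ⊆ X ∪ Y := by
      intro z hzmem
      rw [Finset.mem_biUnion] at hzmem
      obtain ⟨k, hk, hzk⟩ := hzmem
      rw [Finset.mem_union] at hk ⊢
      by_cases hzx : z = x
      · subst hzx
        right
        rw [hY, Finset.mem_erase]
        exact ⟨hxy, Finset.mem_biUnion.2 ⟨i, hiJ, hxB⟩⟩
      by_cases hzy : z = y
      · subst hzy
        left
        rw [hX, Finset.mem_erase]
        exact ⟨fun h => hxy h.symm, Finset.mem_biUnion.2 ⟨i, hiI, hyB⟩⟩
      rcases hk with hk | hk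
      · exact Or.inl (Finset.mem_erase.2 ⟨hzx, Finset.mem_biUnion.2 ⟨k, hk, hzk⟩⟩)
      · exact Or.inr (Finset.mem_erase.2 ⟨hzy, Finset.mem_biUnion.2 ⟨k, hk, hzk⟩⟩)
    have hinter : ((I ∩ J).erase i).biUnion B ⊆ X ∩ Y := by
      intro z hzmem
      rw [Finset.mem_biUnion] at hzmem
      obtain ⟨k, hk, hzk⟩ := hzmem
      rw [Finset.mem_erase, Finset.mem_inter] at hk
      obtain ⟨hki, hkI, hkJ⟩ := hk
      have hzx : z ≠ x := fun h => Finset.disjoint_left.mp (hdisj k i hki) hzk (by rw [h]; exact hxB)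
      have hzy : z ≠ y := fun h => Finset.disjoint_left.mp (hdisj k i hki) hzk (by rw [h]; exact hyB)
      exact Finset.mem_inter.2 ⟨Finset.mem_erase.2 ⟨hzx, Finset.mem_biUnion.2 ⟨k, hkI, hzk⟩⟩,
        Finset.mem_erase.2 ⟨hzy, Finset.mem_biUnion.2 ⟨k, hkJ, hzk⟩⟩⟩
    have h3 : (I ∪ J).card ≤ rnk Indep (X ∪ Y) := (hcond _).trans (rnk_mono hunion)
    have h4 : ((I ∩ J).erase i).card ≤ rnk Indep (X ∩ Y) := (hcond _).trans (rnk_mono hinter)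
    have h5 : ((I ∩ J).erase i).card = (I ∩ J).card - 1 :=
      Finset.card_erase_of_mem (Finset.mem_inter.2 ⟨hiI, hiJ⟩)
    have h6 : 0 < (I ∩ J).card := Finset.card_pos.2 ⟨i, Finset.mem_inter.2 ⟨hiI, hiJ⟩⟩
    have h7 : (I ∪ J).card + (I ∩ J).card = I.card + J.card :=
      Finset.card_union_add_card_inter I J
    omega

lemma rado_demand (hM : IsMatroid Indep) {m : ℕ} (A : Fin m → Finset V)
    (hdisj : ∀ i j, i ≠ j → Disjoint (A i) (A j)) (t : Fin m → ℕ)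
    (hcond : ∀ I : Finset (Fin m), ∑ i ∈ I, t i ≤ rnk Indep (I.biUnion A)) :
    ∃ S, Indep S ∧ ∀ i, t i ≤ (S ∩ A i).card := by
  set N := Finset.univ.sup t with hN
  have ht : ∀ i, t i ≤ N := fun i => Finset.le_sup (Finset.mem_univ i)
  set W := V × Fin N with hW
  set Indep' : Finset W → Prop :=
    fun T => Indep (T.image Prod.fst) ∧ (T.image Prod.fst).card = T.card with hIndep'
  have hM' : IsMatroid Indep' := by
    refine ⟨⟨by simpa using hM.1, by simp⟩, ?_, ?_⟩
    · rintro I J ⟨hJind, hJcard⟩ hIJ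
      have hinj : Set.InjOn Prod.fst (J : Set W) := Finset.card_image_iff.1 hJcard
      refine ⟨hM.2.1 hJind (Finset.image_subset_image hIJ), ?_⟩
      exact Finset.card_image_iff.2 (hinj.mono (by exact_mod_cast hIJ))
    · rintro I J ⟨hIind, hIcard⟩ ⟨hJind, hJcard⟩ hlt
      have hlt' : (I.image Prod.fst).card < (J.image Prod.fst).card := by omega
      obtain ⟨v, hvJ, hvI, hins⟩ := hM.2.2 hIind hJind hlt'
      obtain ⟨p, hpJ, hpv⟩ := Finset.mem_image.1 hvJ
      have hpI : p ∉ I := fun h => hvI (Finset.mem_image.2 ⟨p, h, hpv⟩)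
      refine ⟨p, hpJ, hpI, ?_, ?_⟩
      · rw [Finset.image_insert, hpv]; exact hins
      · rw [Finset.image_insert, hpv, Finset.card_insert_of_notMem hvI,
          Finset.card_insert_of_notMem hpI, hIcard]
  have hrnk' : ∀ T' : Finset W, rnk Indep (T'.image Prod.fst) ≤ rnk Indep' T' := by
    intro T'
    obtain ⟨R, hRsub, hRind, hRcard⟩ := exists_indep_card_rnk hM (T'.image Prod.fst)
    have hex : ∀ v ∈ R, ∃ p, p ∈ T' ∧ p.1 = v := by
      intro v hv
      obtain ⟨p, hp, hpv⟩ := Finset.mem_image.1 (hRsub hv)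
      exact ⟨p, hp, hpv⟩
    set R' : Finset W := R.attach.image (fun v => (hex v.1 v.2).choose) with hR'
    have hR'sub : R' ⊆ T' := by
      intro p hp
      obtain ⟨v, _, hveq⟩ := Finset.mem_image.1 hp
      exact hveq ▸ (hex v.1 v.2).choose_spec.1
    have hR'img : R'.image Prod.fst = R := by
      ext v
      simp only [hR', Finset.image_image, Finset.mem_image, Finset.mem_attach, true_and,
        Subtype.exists, Function.comp_apply]
      constructor
      · rintro ⟨w, hw, hweq⟩
        rw [(hex w hw).choose_spec.2] at hweq
        exact hweq ▸ hw
      · intro hv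
        exact ⟨v, hv, (hex v hv).choose_spec.2⟩
    have hcardle : R'.card ≤ R.card := by
      calc R'.card ≤ R.attach.card := Finset.card_image_le
        _ = R.card := Finset.card_attach
    have hcardge : R.card ≤ R'.card := by
      calc R.card = (R'.image Prod.fst).card := by rw [hR'img]
        _ ≤ R'.card := Finset.card_image_le
    have hcardeq : R'.card = R.card := le_antisymm hcardle hcardge
    have : Indep' R' := ⟨by rw [hR'img]; exact hRind, by rw [hR'img]; omega⟩
    calc rnk Indep (T'.image Prod.fst) = R.card := hRcard.symm
      _ = R'.card := hcardeq.symm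
      _ ≤ rnk Indep' T' := le_rnk_of this hR'sub
  -- the index type and parts
  set ι := (i : Fin m) × Fin (t i) with hι
  set B : ι → Finset W := fun p => (A p.1).image (fun v => (v, Fin.castLE (ht p.1) p.2)) with hB
  have hBdisj : ∀ p q : ι, p ≠ q → Disjoint (B p) (B q) := by
    rintro ⟨i, k⟩ ⟨j, l⟩ hpq
    rw [Finset.disjoint_left]
    rintro z hzp hzq
    obtain ⟨v, hv, hveq⟩ := Finset.mem_image.1 hzp
    obtain ⟨w, hw, hweq⟩ := Finset.mem_image.1 hzq
    have hvw : v = w := by rw [← hveq] at hweq; exact (congrArg Prod.fst hweq).symm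
    by_cases hij : i = j
    · subst hij
      have : (Fin.castLE (ht i) k : Fin N) = Fin.castLE (ht i) l := by
        rw [← hveq] at hweq
        exact congrArg Prod.snd hweq |>.symm
      have : k = l := Fin.castLE_injective _ this
      exact hpq (by rw [this])
    · exact Finset.disjoint_left.mp (hdisj i j hij) hv (hvw ▸ hw)
  have hBcond : ∀ I : Finset ι, I.card ≤ rnk Indep' (I.biUnion B) := by
    intro I
    set I₁ := I.image Sigma.fst with hI₁
    have step1 : I.card ≤ ∑ i ∈ I₁, t i := by
      have hsub : I ⊆ I₁.sigma (fun i => (Finset.univ : Finset (Fin (t i)))) := by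
        rintro ⟨i, k⟩ hik
        rw [Finset.mem_sigma]
        exact ⟨Finset.mem_image_of_mem _ hik, Finset.mem_univ _⟩
      calc I.card ≤ _ := Finset.card_le_card hsub
        _ = ∑ i ∈ I₁, t i := by rw [Finset.card_sigma]; simp
    have step2 : (I.biUnion B).image Prod.fst = I₁.biUnion A := by
      ext v
      simp only [Finset.mem_image, Finset.mem_biUnion, hI₁, hB]
      constructor
      · rintro ⟨z, ⟨p, hp, hz⟩, hzv⟩
        obtain ⟨w, hw, hweq⟩ := hz
        refine ⟨p.1, ⟨p, hp, rfl⟩, ?_⟩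
        rw [← hzv, ← hweq]
        exact hw
      · rintro ⟨i, ⟨p, hp, hpi⟩, hv⟩
        subst hpi
        exact ⟨(v, Fin.castLE (ht p.1) p.2), ⟨p, hp, v, hv, rfl⟩, rfl⟩
    calc I.card ≤ ∑ i ∈ I₁, t i := step1
      _ ≤ rnk Indep (I₁.biUnion A) := hcond I₁
      _ = rnk Indep ((I.biUnion B).image Prod.fst) := by rw [step2]
      _ ≤ rnk Indep' (I.biUnion B) := hrnk' _
  obtain ⟨S', hS'ind, hS'hit⟩ := rado_unit hM' B hBdisj hBcond
  refine ⟨S'.image Prod.fst, hS'ind.1, ?_⟩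
  intro i
  set D := S'.filter (fun p => p.1 ∈ A i) with hD
  have hE : (Finset.univ : Finset (Fin (t i))).biUnion (fun k => S' ∩ B ⟨i, k⟩) ⊆ D := by
    intro p hp
    rw [Finset.mem_biUnion] at hp
    obtain ⟨k, _, hpk⟩ := hp
    rw [Finset.mem_inter] at hpk
    rw [hD, Finset.mem_filter]
    refine ⟨hpk.1, ?_⟩
    obtain ⟨v, hv, hveq⟩ := Finset.mem_image.1 hpk.2
    rw [← hveq]
    exact hv
  have hEcard : t i ≤ ((Finset.univ : Finset (Fin (t i))).biUnion (fun k => S' ∩ B ⟨i, k⟩)).card := by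
    rw [Finset.card_biUnion]
    · calc t i = ∑ _k : Fin (t i), 1 := by simp
        _ ≤ ∑ k : Fin (t i), (S' ∩ B ⟨i, k⟩).card :=
          Finset.sum_le_sum (fun k _ => Finset.card_pos.2 (hS'hit ⟨i, k⟩))
    · intro k _ l _ hkl
      apply Finset.disjoint_left.2
      intro p hp hq
      rw [Finset.mem_inter] at hp hq
      have : (⟨i, k⟩ : ι) ≠ ⟨i, l⟩ := by
        intro h
        exact hkl (eq_of_heq (Sigma.mk.inj_iff.1 h).2)
      exact Finset.disjoint_left.mp (hBdisj _ _ this) hp.2 hq.2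
  have hDcard : t i ≤ D.card := hEcard.trans (Finset.card_le_card hE)
  have hinj : Set.InjOn Prod.fst (S' : Set W) := Finset.card_image_iff.1 hS'ind.2
  have hDimg : (D.image Prod.fst).card = D.card :=
    Finset.card_image_iff.2 (hinj.mono (by exact_mod_cast Finset.filter_subset _ _))
  have hDsub : D.image Prod.fst ⊆ S'.image Prod.fst ∩ A i := by
    intro v hv
    obtain ⟨p, hp, hpv⟩ := Finset.mem_image.1 hv
    rw [hD, Finset.mem_filter] at hp
    exact Finset.mem_inter.2 ⟨Finset.mem_image.2 ⟨p, hp.1, hpv⟩, hpv ▸ hp.2⟩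
  calc t i ≤ D.card := hDcard
    _ = (D.image Prod.fst).card := hDimg.symm
    _ ≤ (S'.image Prod.fst ∩ A i).card := Finset.card_le_card hDsub

/-- Fair representation in a matroid: for every partition of the ground set there is an
independent set meeting each part `A i` in at least `⌊|A i| / ζ(M)⌋` elements. -/
theorem stmt2 (Indep : Finset V → Prop) (hM : IsMatroid Indep) (hL : Loopless Indep)
    (m : ℕ) (A : Fin m → Finset V)
    (hdisj : ∀ i j, i ≠ j → Disjoint (A i) (A j))
    (hcover : Finset.univ.biUnion A = Finset.univ) :
    ∃ S : Finset V, Indep S ∧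
      ∀ i : Fin m, ⌊((A i).card : ℝ) / zeta Indep⌋₊ ≤ (S ∩ A i).card := by
  rcases isEmpty_or_nonempty V with hV | hV
  · refine ⟨∅, hM.1, fun i => ?_⟩
    have : A i = ∅ := Finset.eq_empty_of_isEmpty _
    simp [this]
  · have hrnk1 : ∀ S : Finset V, S.Nonempty → 1 ≤ rnk Indep S := by
      rintro S ⟨v, hv⟩
      have := le_rnk_of (hL v) (Finset.singleton_subset_iff.2 hv)
      simpa using this
    have hbdd : BddAbove {x : ℝ | ∃ S : Finset V, S.Nonempty ∧ x = (S.card : ℝ) / (rnk Indep S : ℝ)} := by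
      refine ⟨Fintype.card V, ?_⟩
      rintro x ⟨S, hS, rfl⟩
      have h1 : (1 : ℝ) ≤ (rnk Indep S : ℝ) := by exact_mod_cast hrnk1 S hS
      calc (S.card : ℝ) / (rnk Indep S : ℝ) ≤ (S.card : ℝ) := by
            apply div_le_self (by positivity) h1
        _ ≤ Fintype.card V := by exact_mod_cast Finset.card_le_univ S
    have hzeta_ge : ∀ S : Finset V, S.Nonempty → (S.card : ℝ) / (rnk Indep S : ℝ) ≤ zeta Indep :=
      fun S hS => le_csSup hbdd ⟨S, hS, rfl⟩
    have hzeta1 : 1 ≤ zeta Indep := by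
      obtain ⟨v⟩ := hV
      have hrnkv : rnk Indep ({v} : Finset V) = 1 := by
        have h1 := rnk_le_card (Indep := Indep) ({v} : Finset V)
        have h2 := hrnk1 {v} ⟨v, Finset.mem_singleton_self v⟩
        simp only [Finset.card_singleton] at h1
        omega
      have := hzeta_ge {v} ⟨v, Finset.mem_singleton_self v⟩
      rw [hrnkv] at this
      simpa using this
    have hzpos : (0 : ℝ) < zeta Indep := lt_of_lt_of_le one_pos hzeta1
    have key : ∀ T : Finset V, (T.card : ℝ) / zeta Indep ≤ (rnk Indep T : ℝ) := by
      intro T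
      rcases T.eq_empty_or_nonempty with rfl | hT
      · simp
      · have hr : (0 : ℝ) < (rnk Indep T : ℝ) := by exact_mod_cast hrnk1 T hT
        rw [div_le_iff₀ hzpos]
        have h := hzeta_ge T hT
        rw [div_le_iff₀ hr] at h
        linarith
    have hcond : ∀ I : Finset (Fin m),
        ∑ i ∈ I, ⌊((A i).card : ℝ) / zeta Indep⌋₊ ≤ rnk Indep (I.biUnion A) := by
      intro I
      have hreal : ((∑ i ∈ I, ⌊((A i).card : ℝ) / zeta Indep⌋₊ : ℕ) : ℝ)
          ≤ (rnk Indep (I.biUnion A) : ℝ) := by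
        push_cast
        calc (∑ i ∈ I, (⌊((A i).card : ℝ) / zeta Indep⌋₊ : ℝ))
            ≤ ∑ i ∈ I, ((A i).card : ℝ) / zeta Indep :=
              Finset.sum_le_sum (fun i _ => Nat.floor_le (by positivity))
          _ = (∑ i ∈ I, ((A i).card : ℝ)) / zeta Indep := by rw [Finset.sum_div]
          _ = ((I.biUnion A).card : ℝ) / zeta Indep := by
              rw [Finset.card_biUnion (fun i _ j _ hij => hdisj i j hij)]
              push_cast; ring
          _ ≤ (rnk Indep (I.biUnion A) : ℝ) := key _
      exact_mod_cast hreal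
    exact rado_demand hM A hdisj (fun i => ⌊((A i).card : ℝ) / zeta Indep⌋₊) hcond
end

section
/- Let P, Q be matroids on the same ground set, D = P ∩ Q, and let S, T ∈ D with |S| = |T| = g. Then there exist orderings s₁,…,s_g of S and t₁,…,t_g of T such that for every i = 1,…,g the set S − s₁ + t₁ − s₂ + t₂ − ⋯ + t_{i−1} − s_i belongs to D. -/
open Finset

variable {V : Type*} [Fintype V] [DecidableEq V]

/-!
Remove an arbitrary `s₁` from `S`; the current set `C ∈ D` then has size `g - 1`. While `C` still
contains elements of `S`, augment `C` in `P` by some `t ∈ T \ C`. If `C + t` is `Q`-independent,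
remove any remaining element of `S`. Otherwise the `Q`-circuit of `C + t` is not contained in the
`Q`-independent set `W + t ⊆ T`, where `W` is the set of elements added so far; so it contains a
remaining element `s` of `S`, and `C + t - s ∈ D`. The last element `t_g` is the one element of `T`
that was never added.
-/

namespace IsMatroid

variable {α : Type*} [DecidableEq α] {Q : Finset α → Prop} {I J W X Y : Finset α} {t : α}

theorem subset (hQ : IsMatroid Q) (hJ : Q J) (hIJ : I ⊆ J) : Q I := hQ.2.1 hJ hIJ

theorem exists_insert_of_card_lt (hQ : IsMatroid Q) (hI : Q I) (hJ : Q J) (hIJ : I.card < J.card) :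
    ∃ x ∈ J, x ∉ I ∧ Q (insert x I) :=
  hQ.2.2 hI hJ hIJ

theorem exists_superset_card_le (hQ : IsMatroid Q) (hW : Q W) (hX : Q X) (hWY : W ⊆ Y)
    (hXY : X ⊆ Y) : ∃ Z, W ⊆ Z ∧ Z ⊆ Y ∧ Q Z ∧ X.card ≤ Z.card := by
  classical
  obtain ⟨Z, hZ, hmax⟩ := (Y.powerset.filter fun Z => W ⊆ Z ∧ Q Z).exists_max_image card
    ⟨W, by simp [hWY, hW]⟩
  simp only [mem_filter, mem_powerset] at hZ hmax
  obtain ⟨hZY, hWZ, hQZ⟩ := hZ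
  refine ⟨Z, hWZ, hZY, hQZ, not_lt.1 fun hlt => ?_⟩
  obtain ⟨x, hxX, hxZ, hQx⟩ := hQ.exists_insert_of_card_lt hQZ hX hlt
  have := hmax (insert x Z) ⟨insert_subset (hXY hxX) hZY, hWZ.trans (subset_insert x Z), hQx⟩
  rw [card_insert_of_notMem hxZ] at this
  omega

theorem exists_insert_erase_of_not_indep (hQ : IsMatroid Q) (hX : Q X) (hdep : ¬ Q (insert t X))
    (hW : Q W) (hWX : W ⊆ insert t X) (htW : t ∈ W) :
    ∃ s ∈ X, s ∉ W ∧ Q (insert t (X.erase s)) := by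
  have htX : t ∉ X := fun h => hdep (by rwa [insert_eq_of_mem h])
  -- a maximal independent `Z` with `W ⊆ Z ⊆ X + t` has size `|X|`, so it is `X + t - s`
  obtain ⟨Z, hWZ, hZX, hQZ, hcard⟩ :=
    hQ.exists_superset_card_le hW hX hWX (subset_insert t X)
  obtain ⟨s, hs, hZs⟩ := ssubset_iff_exists_subset_erase.1 <|
    hZX.ssubset_of_ne fun h => hdep (h ▸ hQZ)
  have hst : s ≠ t := by rintro rfl; exact (notMem_erase s _) (hZs (hWZ htW))
  have hZ : Z = (insert t X).erase s := by
    refine eq_of_subset_of_card_le hZs ?_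
    rw [card_erase_of_mem hs, card_insert_of_notMem htX]
    omega
  refine ⟨s, (mem_insert.1 hs).resolve_left hst, fun hsW => ?_, ?_⟩
  · exact notMem_erase s _ (hZ ▸ hWZ hsW)
  · rwa [← erase_insert_of_ne hst.symm, ← hZ]

end IsMatroid

section Exchange

variable {α : Type*} [DecidableEq α] {P Q : Finset α → Prop} {T W R : Finset α}

theorem exists_exchange_step (hP : IsMatroid P) (hQ : IsMatroid Q) (hT : (P ⊓ Q) T) (hWT : W ⊆ T)
    (hR : R.Nonempty) (hC : (P ⊓ Q) (W ∪ R)) (hcard : (W ∪ R).card < T.card) :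
    ∃ t ∈ T, t ∉ W ∪ R ∧ ∃ s ∈ R, (P ⊓ Q) (insert t W ∪ R.erase s) := by
  obtain ⟨t, htT, htC, hPt⟩ := hP.exists_insert_of_card_lt hC.1 hT.1 hcard
  have hsub (s : α) : insert t W ∪ R.erase s ⊆ insert t (W ∪ R) := by
    rw [insert_union]; exact insert_subset_insert t (union_subset_union_right (erase_subset s R))
  suffices ∃ s ∈ R, Q (insert t W ∪ R.erase s) by
    obtain ⟨s, hs, hQs⟩ := this
    exact ⟨t, htT, htC, s, hs, hP.subset hPt (hsub s), hQs⟩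
  by_cases hQt : Q (insert t (W ∪ R))
  · obtain ⟨s, hs⟩ := hR
    exact ⟨s, hs, hQ.subset hQt (hsub s)⟩
  -- `W + t ⊆ T` is independent, so the circuit of `W ∪ R + t` meets `R`
  obtain ⟨s, hsC, hsW, hQs⟩ := hQ.exists_insert_erase_of_not_indep hC.2 hQt
    (hQ.subset hT.2 (insert_subset htT hWT)) (insert_subset_insert t subset_union_left)
    (mem_insert_self t W)
  have hsW' : s ∉ W := fun h => hsW (mem_insert_of_mem h)
  refine ⟨s, (mem_union.1 hsC).resolve_left hsW', ?_⟩
  rwa [erase_union_distrib, erase_eq_of_notMem hsW', ← insert_union] at hQs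

-- `W` collects the elements of `T` added so far, `R` the elements of `S` not yet removed.
theorem exists_exchange_sequence (hP : IsMatroid P) (hQ : IsMatroid Q) (hT : (P ⊓ Q) T) (n : ℕ)
    (hRn : R.card = n) (hWT : W ⊆ T) (hWR : Disjoint W R) (hcard : W.card + n + 1 = T.card)
    (hC : (P ⊓ Q) (W ∪ R)) :
    ∃ ls lt : List α, ls.Nodup ∧ ls.toFinset = R ∧ lt.Nodup ∧ lt.toFinset = T \ W ∧
      ∀ k ≤ n, (P ⊓ Q) (W ∪ (lt.take k).toFinset ∪ (ls.drop k).toFinset) := by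
  induction n generalizing W R with
  | zero =>
    obtain ⟨t, ht⟩ := card_eq_one.1 (by rw [card_sdiff_of_subset hWT]; omega : (T \ W).card = 1)
    obtain rfl := card_eq_zero.1 hRn
    refine ⟨[], [t], List.nodup_nil, rfl, List.nodup_singleton t, by simp [ht], ?_⟩
    rintro k hk
    obtain rfl := Nat.le_zero.1 hk
    simpa using hC
  | succ n ih =>
    obtain ⟨t, htT, htC, s, hsR, hD⟩ := exists_exchange_step hP hQ hT hWT
      (card_pos.1 (by omega)) hC (by grw [card_union_le]; omega)
    rw [mem_union, not_or] at htC
    obtain ⟨ls, lt, hls, hlsR, hlt, hltT, hvalley⟩ := ih (W := insert t W) (R := R.erase s)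
      (by rw [card_erase_of_mem hsR, hRn]; rfl) (insert_subset htT hWT)
      (disjoint_insert_left.2
        ⟨fun h => htC.2 (mem_of_mem_erase h), hWR.mono_right (erase_subset s R)⟩)
      (by rw [card_insert_of_notMem htC.1]; omega) hD
    refine ⟨s :: ls, t :: lt, List.nodup_cons.2 ⟨fun h => ?_, hls⟩, ?_,
      List.nodup_cons.2 ⟨fun h => ?_, hlt⟩, ?_, ?_⟩
    · simpa [hlsR] using List.mem_toFinset.2 h
    · rw [List.toFinset_cons, hlsR, insert_erase hsR]
    · simpa [hltT] using List.mem_toFinset.2 h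
    · rw [List.toFinset_cons, hltT, sdiff_insert, insert_erase (mem_sdiff.2 ⟨htT, htC.1⟩)]
    rintro (_ | k) hk
    · simpa [hlsR, insert_erase hsR] using hC
    · simpa [insert_union, union_insert] using hvalley k (by omega)

end Exchange

theorem List.Nodup.toFinset_sdiff_take {α : Type*} [DecidableEq α] {l : List α} (hl : l.Nodup)
    (k : ℕ) : l.toFinset \ (l.take k).toFinset = (l.drop k).toFinset := by
  nth_rw 1 [← List.take_append_drop k l]
  rw [List.toFinset_append]
  exact union_sdiff_cancel_left <| List.disjoint_toFinset_iff_disjoint.2 <|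
    List.disjoint_take_drop hl le_rfl

theorem List.Nodup.exists_fin_enum {α : Type*} [DecidableEq α] {l : List α} (hl : l.Nodup)
    {g : ℕ} (hg : l.length = g) :
    ∃ f : Fin g → α, Function.Injective f ∧ image f univ = l.toFinset ∧
      (∀ i, image f (univ.filter (· < i)) = (l.take i).toFinset) ∧
      ∀ i, image f (univ.filter (· ≤ i)) = (l.take (i + 1)).toFinset := by
  subst hg
  have key (m : ℕ) : image l.get (univ.filter fun j => (j : ℕ) < m) = (l.take m).toFinset := by
    ext a
    simp only [mem_image, mem_filter_univ, List.mem_toFinset, List.mem_take_iff_getElem,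
      List.get_eq_getElem]
    constructor
    · rintro ⟨j, hj, rfl⟩
      exact ⟨j, by omega, rfl⟩
    · rintro ⟨j, hj, rfl⟩
      exact ⟨⟨j, by omega⟩, by simp only; omega, rfl⟩
  refine ⟨l.get, List.nodup_iff_injective_get.1 hl, ?_, fun i => ?_, fun i => ?_⟩
  · simpa only [List.take_length, filter_true_of_mem fun (j : Fin l.length) _ => j.isLt]
      using key l.length
  · rw [← key]; congr
  · rw [← key]; congr; ext j; exact Fin.le_iff_val_le_val.trans Nat.lt_succ_iff.symm

theorem exists_exchange_orderings_lists {α : Type*} [DecidableEq α] {P Q : Finset α → Prop}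
    {S T : Finset α} (hP : IsMatroid P) (hQ : IsMatroid Q) (hS : (P ⊓ Q) S) (hT : (P ⊓ Q) T)
    (hST : S.card = T.card) :
    ∃ ls lt : List α, ls.Nodup ∧ ls.toFinset = S ∧ lt.Nodup ∧ lt.toFinset = T ∧
      ∀ i < S.card, (P ⊓ Q) (S \ (ls.take (i + 1)).toFinset ∪ (lt.take i).toFinset) := by
  rcases S.eq_empty_or_nonempty with rfl | ⟨s₁, hs₁⟩
  · refine ⟨[], [], List.nodup_nil, rfl, List.nodup_nil, ?_, by simp⟩
    rw [List.toFinset_nil, eq_comm, ← card_eq_zero, ← hST, card_empty]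
  have hSs₁ : S.erase s₁ ⊆ S := erase_subset s₁ S
  obtain ⟨ls, lt, hls, hlsS, hlt, hltT, hvalley⟩ :=
    exists_exchange_sequence hP hQ hT (S.card - 1) (card_erase_of_mem hs₁) (empty_subset T)
      (disjoint_empty_left _) (by have := card_pos.2 ⟨s₁, hs₁⟩; rw [card_empty, ← hST]; omega)
      (by rw [empty_union]; exact ⟨hP.subset hS.1 hSs₁, hQ.subset hS.2 hSs₁⟩)
  have hls' : (s₁ :: ls).Nodup :=
    List.nodup_cons.2 ⟨fun h => by simpa [hlsS] using List.mem_toFinset.2 h, hls⟩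
  have hlsS' : (s₁ :: ls).toFinset = S := by rw [List.toFinset_cons, hlsS, insert_erase hs₁]
  refine ⟨s₁ :: ls, lt, hls', hlsS', hlt, by rw [hltT, sdiff_empty], fun i hi => ?_⟩
  rw [← hlsS', hls'.toFinset_sdiff_take, List.drop_succ_cons, union_comm]
  simpa only [empty_union] using hvalley i (by omega)

/-- Exchange sequences in the intersection of two matroids: for `S, T ∈ D = P ∩ Q` of the
same size `g` there are orderings `s₁,…,s_g` of `S` and `t₁,…,t_g` of `T` such that
`S - s₁ + t₁ - s₂ + ⋯ + t_{i-1} - s_i ∈ D` for all `i`. -/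
theorem stmt4 (P Q : Finset V → Prop) (hP : IsMatroid P) (hQ : IsMatroid Q)
    (S T : Finset V) (g : ℕ)
    (hS : P S ∧ Q S) (hT : P T ∧ Q T) (hSg : S.card = g) (hTg : T.card = g) :
    ∃ s t : Fin g → V, Function.Injective s ∧ Function.Injective t ∧
      Finset.image s Finset.univ = S ∧ Finset.image t Finset.univ = T ∧
      ∀ i : Fin g,
        P ((S \ Finset.image s (Finset.univ.filter (fun j => j ≤ i))) ∪
            Finset.image t (Finset.univ.filter (fun j => j < i))) ∧
        Q ((S \ Finset.image s (Finset.univ.filter (fun j => j ≤ i))) ∪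
            Finset.image t (Finset.univ.filter (fun j => j < i))) := by
  obtain ⟨ls, lt, hls, hlsS, hlt, hltT, hvalley⟩ :=
    exists_exchange_orderings_lists hP hQ hS hT (hSg.trans hTg.symm)
  obtain ⟨s, hs, hsS, -, hs_le⟩ :=
    hls.exists_fin_enum (by rw [← List.toFinset_card_of_nodup hls, hlsS, hSg])
  obtain ⟨t, ht, htT, ht_lt, -⟩ :=
    hlt.exists_fin_enum (by rw [← List.toFinset_card_of_nodup hlt, hltT, hTg])
  refine ⟨s, t, hs, ht, hsS.trans hlsS, htT.trans hltT, fun i => ?_⟩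
  rw [hs_le, ht_lt]
  exact hvalley i (hSg ▸ i.isLt)
end

section
/- Let M be a loopless matroid on ground set V with |V| = n, let ζ = ζ(M), let g ≤ n/ζ be a positive integer, and let S ⊆ V. Then S contains an independent set R of M with |R| ≤ g and |R| ≥ g·|S|/n. -/
open Finset

variable {V : Type*} [Fintype V] [DecidableEq V]

/-- Key step for truncation: every `S ⊆ V` contains an independent set `R` with
`|R| ≤ g` and `|R| ≥ g|S|/n`, whenever `g ≤ n/ζ(M)`. -/
theorem stmt6 (Indep : Finset V → Prop) (hM : IsMatroid Indep) (hL : Loopless Indep)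
    (g : ℕ) (hg : 1 ≤ g) (hgn : (g : ℝ) ≤ (Fintype.card V : ℝ) / zeta Indep)
    (S : Finset V) :
    ∃ R : Finset V, R ⊆ S ∧ Indep R ∧ R.card ≤ g ∧
      (g : ℝ) * (S.card : ℝ) / (Fintype.card V : ℝ) ≤ (R.card : ℝ) := by
  classical
  obtain ⟨hempty, hdown, -⟩ := hM
  rcases S.eq_empty_or_nonempty with rfl | hS
  · exact ⟨∅, Subset.rfl, hempty, by simpa using hg, by simp⟩
  -- S nonempty; basic facts
  have hn : 0 < Fintype.card V := Fintype.card_pos_iff.mpr ⟨hS.choose⟩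
  have hnR : (0:ℝ) < (Fintype.card V : ℝ) := by exact_mod_cast hn
  -- rank lower bound for nonempty sets
  have hrnk_pos : ∀ T : Finset V, T.Nonempty → 1 ≤ rnk Indep T := by
    intro T ⟨v, hv⟩
    have : ({v} : Finset V) ∈ T.powerset.filter (fun e => Indep e) := by
      simp [Finset.mem_powerset, Finset.singleton_subset_iff, hv, hL v]
    calc 1 = ({v} : Finset V).card := by simp
    _ ≤ _ := Finset.le_sup this
  -- rank is attained
  have hattain : ∃ Rm : Finset V, Rm ⊆ S ∧ Indep Rm ∧ Rm.card = rnk Indep S := by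
    have hne : (S.powerset.filter (fun e => Indep e)).Nonempty :=
      ⟨∅, by simp [hempty]⟩
    obtain ⟨Rm, hRm, hcard⟩ := Finset.exists_mem_eq_sup _ hne Finset.card
    simp only [Finset.mem_filter, Finset.mem_powerset] at hRm
    exact ⟨Rm, hRm.1, hRm.2, hcard.symm⟩
  obtain ⟨Rm, hRmS, hRmI, hRmcard⟩ := hattain
  -- choose R of size min g (rnk S)
  set r := rnk Indep S with hr
  obtain ⟨R, hRRm, hRcard⟩ := Finset.exists_subset_card_eq
    (show min g r ≤ Rm.card by rw [hRmcard]; exact min_le_right _ _)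
  refine ⟨R, hRRm.trans hRmS, hdown hRmI hRRm, by rw [hRcard]; exact min_le_left _ _, ?_⟩
  rw [hRcard]
  have hSn : (S.card : ℝ) ≤ (Fintype.card V : ℝ) := by
    exact_mod_cast S.card_le_univ.trans_eq (Finset.card_univ)
  rcases le_or_gt g r with h | h
  · rw [min_eq_left h]
    rw [div_le_iff₀ hnR]
    have : (0:ℝ) ≤ (g:ℝ) := by positivity
    calc (g:ℝ) * S.card ≤ (g:ℝ) * (Fintype.card V : ℝ) :=
          mul_le_mul_of_nonneg_left hSn this
    _ = (g:ℝ) * (Fintype.card V : ℝ) := rfl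
  · rw [min_eq_right h.le]
    -- need g|S|/n ≤ r via zeta
    have hrpos : (0:ℝ) < (r:ℝ) := by exact_mod_cast hrnk_pos S hS
    have hmem : (S.card : ℝ) / (r:ℝ) ∈
        {x : ℝ | ∃ T : Finset V, T.Nonempty ∧ x = (T.card : ℝ) / (rnk Indep T : ℝ)} :=
      ⟨S, hS, rfl⟩
    have hbdd : BddAbove {x : ℝ | ∃ T : Finset V, T.Nonempty ∧
        x = (T.card : ℝ) / (rnk Indep T : ℝ)} := by
      refine ⟨(Fintype.card V : ℝ), ?_⟩
      rintro x ⟨T, hT, rfl⟩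
      have h1 : (1:ℝ) ≤ (rnk Indep T : ℝ) := by exact_mod_cast hrnk_pos T hT
      have hTn : (T.card : ℝ) ≤ (Fintype.card V : ℝ) := by
        exact_mod_cast T.card_le_univ.trans_eq (Finset.card_univ)
      calc (T.card : ℝ) / (rnk Indep T : ℝ) ≤ (T.card : ℝ) / 1 :=
            div_le_div_of_nonneg_left (by positivity) (by linarith) h1
      _ ≤ _ := by simpa using hTn
    have hzeta_ge : (S.card : ℝ) / (r:ℝ) ≤ zeta Indep := le_csSup hbdd hmem
    have hzeta_pos : 0 < zeta Indep := by
      have hS1 : (1:ℝ) ≤ (S.card : ℝ) := by exact_mod_cast hS.card_pos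
      have : (0:ℝ) < (S.card : ℝ) / (r:ℝ) := by positivity
      linarith
    have hgz : (g:ℝ) * zeta Indep ≤ (Fintype.card V : ℝ) :=
      (le_div_iff₀ hzeta_pos).mp hgn
    have key : (g:ℝ) * ((S.card : ℝ) / (r:ℝ)) ≤ (Fintype.card V : ℝ) := by
      have : (g:ℝ) * ((S.card : ℝ) / (r:ℝ)) ≤ (g:ℝ) * zeta Indep :=
        mul_le_mul_of_nonneg_left hzeta_ge (by positivity)
      linarith
    rw [div_le_iff₀ hnR]
    rw [← mul_div_assoc] at key
    have := (div_le_iff₀ hrpos).mp key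
    linarith
end

section
/- Let A, B partition a set V of size n, let ζ ≥ 1, δ = 1/ζ − 1/n, g = ⌊n/ζ⌋, and let S be a set of size g−1 or g with S ⊆ V. If |S ∩ A| ≤ δ|A| (i.e., S fails to represent A δ-fairly even without the floor), then |S ∩ B| > δ|B| − 1. -/
/-! Since `δ·n = n/ζ - 1` and `|S| ≥ ⌊n/ζ⌋ - 1 > n/ζ - 2`, we get `|S| > δ·n - 1`. Splitting
`n = |A| + |B|` and `|S| = |S ∩ A| + |S ∩ B|`, a share of at most `δ|A|` on `A` leaves more than
`δ|B| - 1` for `B`. -/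

open Finset

theorem Finset.card_inter_add_card_inter_of_disjoint {α : Type*} [DecidableEq α]
    {A B S : Finset α} (hAB : Disjoint A B) (hS : S ⊆ A ∪ B) :
    (S ∩ A).card + (S ∩ B).card = S.card := by
  rw [← card_union_of_disjoint (hAB.mono inter_subset_right inter_subset_right),
    ← inter_union_distrib_left, inter_eq_left.mpr hS]

theorem Finset.card_add_card_of_disjoint_of_union_eq_univ {α : Type*} [Fintype α] [DecidableEq α]
    {A B : Finset α} (hAB : Disjoint A B) (hcover : A ∪ B = univ) :
    A.card + B.card = Fintype.card α := by
  rw [← card_univ, ← hcover, card_union_of_disjoint hAB]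

theorem sub_one_le_of_eq_sub_one_or_eq {K : Type*} [Ring K] [PartialOrder K]
    [IsOrderedRing K] {k g : ℕ} (hk : k = g - 1 ∨ k = g) : (g : K) - 1 ≤ k := by
  rcases hk with rfl | rfl
  · rcases g with _ | g <;> simp
  · simp

theorem mul_sub_one_lt_of_floor_div_sub_one_le {n : ℕ} (hn : n ≠ 0) {ζ : ℝ} {s : ℕ}
    (hs : (⌊(n : ℝ) / ζ⌋₊ : ℝ) - 1 ≤ s) : (1 / ζ - 1 / (n : ℝ)) * n - 1 < s := by
  have hδn : (1 / ζ - 1 / (n : ℝ)) * n = n / ζ - 1 := by field_simp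
  linarith [Nat.sub_one_lt_floor ((n : ℝ) / ζ)]

theorem sub_one_lt_of_le_mul_of_add_eq {K : Type*} [CommRing K] [PartialOrder K]
    [IsStrictOrderedRing K] {δ a b n sA sB s : K} (hab : a + b = n) (hsum : sA + sB = s)
    (hs : δ * n - 1 < s) (hA : sA ≤ δ * a) : δ * b - 1 < sB := by
  linear_combination hs + hA + δ * hab - hsum

theorem stmt11_general {V : Type*} [Fintype V] [DecidableEq V]
    (A B : Finset V) (hdisj : Disjoint A B) (hcover : A ∪ B = Finset.univ)
    (n : ℕ) (hn : n = Fintype.card V) (hn0 : 0 < n)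
    (ζ δ : ℝ) (hδ : δ = 1 / ζ - 1 / (n : ℝ))
    (g : ℕ) (hg : g = ⌊(n : ℝ) / ζ⌋₊)
    (S : Finset V) (hScard : S.card = g - 1 ∨ S.card = g)
    (hA : ((S ∩ A).card : ℝ) ≤ δ * (A.card : ℝ)) :
    δ * (B.card : ℝ) - 1 < ((S ∩ B).card : ℝ) := by
  have hsplit : A.card + B.card = n :=
    hn ▸ card_add_card_of_disjoint_of_union_eq_univ hdisj hcover
  have hsum : (S ∩ A).card + (S ∩ B).card = S.card :=
    card_inter_add_card_inter_of_disjoint hdisj (hcover ▸ subset_univ S)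
  have hlarge : δ * n - 1 < S.card := hδ ▸ mul_sub_one_lt_of_floor_div_sub_one_le hn0.ne'
    (hg ▸ sub_one_le_of_eq_sub_one_or_eq hScard)
  exact sub_one_lt_of_le_mul_of_add_eq (by exact_mod_cast hsplit) (by exact_mod_cast hsum)
    hlarge hA

/-- The key combinatorial step: if `(A,B)` partitions `V` (`|V| = n`), `δ = 1/ζ - 1/n`,
`g = ⌊n/ζ⌋`, `S ⊆ V` has size `g-1` or `g`, and `|S ∩ A| ≤ δ|A|`, then
`|S ∩ B| > δ|B| - 1`. -/
theorem stmt11 {V : Type*} [Fintype V] [DecidableEq V]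
    (A B : Finset V) (hdisj : Disjoint A B) (hcover : A ∪ B = Finset.univ)
    (n : ℕ) (hn : n = Fintype.card V) (hn0 : 0 < n)
    (ζ δ : ℝ) (hζ : 1 ≤ ζ) (hδ : δ = 1 / ζ - 1 / (n : ℝ))
    (g : ℕ) (hg : g = ⌊(n : ℝ) / ζ⌋₊) (hg1 : 1 ≤ g)
    (S : Finset V) (hScard : S.card = g - 1 ∨ S.card = g)
    (hA : ((S ∩ A).card : ℝ) ≤ δ * (A.card : ℝ)) :
    δ * (B.card : ℝ) - 1 < ((S ∩ B).card : ℝ) :=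
  stmt11_general A B hdisj hcover n hn hn0 ζ δ hδ g hg S hScard hA
end

section
/- Let P be the graphic matroid on the edge set of K₄ and let Q be the partition matroid on E(K₄) whose three parts are the three perfect matchings of K₄ (a set is independent in Q if it contains at most one edge from each perfect matching). Then β(P) = 2, β(Q) = 2, and β(P ∩ Q) = 3. -/
open Finset

/-- The edge set of `K₄`. -/
noncomputable def E4 : Finset (Sym2 (Fin 4)) := (⊤ : SimpleGraph (Fin 4)).edgeSet.toFinset

/-- Independence in the graphic matroid of `K₄`: acyclic sets of edges. -/
def graphicIndep (e : Finset (Sym2 (Fin 4))) : Prop :=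
  ↑e ⊆ (⊤ : SimpleGraph (Fin 4)).edgeSet ∧ (SimpleGraph.fromEdgeSet (e : Set (Sym2 (Fin 4)))).IsAcyclic

/-- The three perfect matchings of `K₄`. -/
def PM : Fin 3 → Finset (Sym2 (Fin 4))
  | 0 => {s(0, 1), s(2, 3)}
  | 1 => {s(0, 2), s(1, 3)}
  | 2 => {s(0, 3), s(1, 2)}

/-- Independence in the partition matroid whose parts are the perfect matchings of `K₄`. -/
def pmIndep (e : Finset (Sym2 (Fin 4))) : Prop :=
  ↑e ⊆ (⊤ : SimpleGraph (Fin 4)).edgeSet ∧ ∀ i : Fin 3, (e ∩ PM i).card ≤ 1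

/-- The covering number of a complex on the ground set `E(K₄)`. -/
noncomputable def betaK4 (Indep : Finset (Sym2 (Fin 4)) → Prop) : ℕ :=
  sInf {k : ℕ | ∃ F : Finset (Finset (Sym2 (Fin 4))), (∀ m ∈ F, Indep m) ∧
    (∀ x ∈ E4, ∃ m ∈ F, x ∈ m) ∧ F.card = k}

/-! Two spanning paths cover `K₄`, and so do a star and a triangle; a single set cannot be
independent, since `E(K₄)` contains a triangle and a perfect matching.

If two sets `a, b` independent in both matroids cover `E(K₄)`, then `a` and `E(K₄) \ a ⊆ b` are both
independent in `Q`, so `a` picks exactly one edge from each perfect matching. Such a transversal is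
a triangle or a star, and the complement of a star is a triangle: `a` or `E(K₄) \ a` contains a
cycle. -/

open SimpleGraph

theorem SimpleGraph.coe_subset_edgeSet_top_iff {V : Type*} {e : Finset (Sym2 V)} :
    ↑e ⊆ (⊤ : SimpleGraph V).edgeSet ↔ ∀ x ∈ e, ¬x.IsDiag := by
  simp [Set.subset_def, edgeSet_top]

theorem Finset.exists_subset_union_of_card_le_two {α : Type*} [DecidableEq α] {S : Finset α}
    {F : Finset (Finset α)} (hS : S.Nonempty) (hcov : ∀ x ∈ S, ∃ m ∈ F, x ∈ m) (hF : #F ≤ 2) :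
    ∃ a ∈ F, ∃ b ∈ F, S ⊆ a ∪ b := by
  obtain ⟨x, hx⟩ := hS
  obtain ⟨a, ha, -⟩ := hcov x hx
  by_cases hsub : F ⊆ {a}
  · refine ⟨a, ha, a, ha, fun x hx => ?_⟩
    obtain ⟨m, hm, hxm⟩ := hcov x hx
    rw [mem_singleton.1 (hsub hm)] at hxm
    exact mem_union_left _ hxm
  · obtain ⟨b, hb, hba⟩ := not_subset.1 hsub
    have hF_eq : F = {a, b} :=
      (eq_of_subset_of_card_le (insert_subset ha (singleton_subset_iff.2 hb))
        (hF.trans_eq (card_pair (Ne.symm (notMem_singleton.1 hba))).symm)).symm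
    refine ⟨a, ha, b, hb, fun x hx => ?_⟩
    obtain ⟨m, hm, hxm⟩ := hcov x hx
    rw [hF_eq, mem_insert, mem_singleton] at hm
    rcases hm with rfl | rfl
    exacts [mem_union_left _ hxm, mem_union_right _ hxm]

instance : DecidablePred graphicIndep := fun e =>
  decidable_of_iff ((∀ x ∈ e, ¬x.IsDiag) ∧ ∀ v w, (fromEdgeSet (e : Set (Sym2 (Fin 4)))).Adj v w →
      ¬((fromEdgeSet (e : Set (Sym2 (Fin 4)))).deleteEdges {s(v, w)}).Reachable v w) <| by
    rw [graphicIndep, coe_subset_edgeSet_top_iff, isAcyclic_iff_forall_adj_isBridge]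
    rfl

instance : DecidablePred pmIndep := fun e =>
  decidable_of_iff ((∀ x ∈ e, ¬x.IsDiag) ∧ ∀ i, #(e ∩ PM i) ≤ 1) <| by
    rw [pmIndep, coe_subset_edgeSet_top_iff]

theorem graphicIndep.subset {a b : Finset (Sym2 (Fin 4))} (hb : graphicIndep b) (hab : a ⊆ b) :
    graphicIndep a :=
  ⟨(coe_subset.2 hab).trans hb.1, hb.2.anti (fromEdgeSet_mono (coe_subset.2 hab))⟩

theorem pmIndep.subset {a b : Finset (Sym2 (Fin 4))} (hb : pmIndep b) (hab : a ⊆ b) :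
    pmIndep a :=
  ⟨(coe_subset.2 hab).trans hb.1, fun i =>
    (card_le_card (inter_subset_inter_right hab)).trans (hb.2 i)⟩

theorem pmIndep.subset_E4 {a : Finset (Sym2 (Fin 4))} (ha : pmIndep a) : a ⊆ E4 :=
  Set.subset_toFinset.2 ha.1

theorem E4_eq_union_PM : E4 = PM 0 ∪ PM 1 ∪ PM 2 := by decide

theorem PM_subset_E4 (i : Fin 3) : PM i ⊆ E4 := by revert i; decide

theorem card_PM (i : Fin 3) : #(PM i) = 2 := by revert i; decide

theorem exists_inter_PM_eq_singleton {a : Finset (Sym2 (Fin 4))} (ha : pmIndep a)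
    (hc : pmIndep (E4 \ a)) (i : Fin 3) : ∃ x ∈ PM i, a ∩ PM i = {x} := by
  have hsplit : PM i ⊆ a ∩ PM i ∪ (E4 \ a) ∩ PM i := fun x hx => by
    by_cases hxa : x ∈ a <;> simp [hx, hxa, PM_subset_E4 i hx]
  have := card_le_card hsplit
  have := card_union_le (a ∩ PM i) ((E4 \ a) ∩ PM i)
  have := card_PM i
  have := ha.2 i
  have := hc.2 i
  obtain ⟨x, hx⟩ := card_eq_one.1 (by omega : #(a ∩ PM i) = 1)
  exact ⟨x, (mem_inter.1 (hx ▸ mem_singleton_self x)).2, hx⟩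

theorem exists_eq_transversal_of_pmIndep_sdiff {a : Finset (Sym2 (Fin 4))} (ha : pmIndep a)
    (hc : pmIndep (E4 \ a)) : ∃ x₀ ∈ PM 0, ∃ x₁ ∈ PM 1, ∃ x₂ ∈ PM 2, a = {x₀, x₁, x₂} := by
  obtain ⟨x₀, h₀, e₀⟩ := exists_inter_PM_eq_singleton ha hc 0
  obtain ⟨x₁, h₁, e₁⟩ := exists_inter_PM_eq_singleton ha hc 1
  obtain ⟨x₂, h₂, e₂⟩ := exists_inter_PM_eq_singleton ha hc 2
  refine ⟨x₀, h₀, x₁, h₁, x₂, h₂, ?_⟩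
  calc a = a ∩ E4 := (inter_eq_left.2 ha.subset_E4).symm
    _ = a ∩ PM 0 ∪ a ∩ PM 1 ∪ a ∩ PM 2 := by rw [E4_eq_union_PM, inter_union_distrib_left,
          inter_union_distrib_left]
    _ = {x₀, x₁, x₂} := by rw [e₀, e₁, e₂, union_assoc, ← insert_eq, ← insert_eq]

theorem not_graphicIndep_transversal_and_sdiff : ∀ x₀ ∈ PM 0, ∀ x₁ ∈ PM 1, ∀ x₂ ∈ PM 2,
    ¬(graphicIndep {x₀, x₁, x₂} ∧ graphicIndep (E4 \ {x₀, x₁, x₂})) := by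
  decide +kernel

def IsCoverK4 (Indep : Finset (Sym2 (Fin 4)) → Prop) (F : Finset (Finset (Sym2 (Fin 4)))) :
    Prop :=
  (∀ m ∈ F, Indep m) ∧ ∀ x ∈ E4, ∃ m ∈ F, x ∈ m

theorem betaK4_eq {Indep : Finset (Sym2 (Fin 4)) → Prop} {F : Finset (Finset (Sym2 (Fin 4)))}
    {k : ℕ} (hF : IsCoverK4 Indep F) (hk : #F = k)
    (hmin : ∀ F', IsCoverK4 Indep F' → k ≤ #F') : betaK4 Indep = k :=
  IsLeast.csInf_eq ⟨⟨F, hF.1, hF.2, hk⟩, by rintro _ ⟨F', h₁, h₂, rfl⟩; exact hmin F' ⟨h₁, h₂⟩⟩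

theorem IsCoverK4.exists_subset_union {Indep : Finset (Sym2 (Fin 4)) → Prop}
    {F : Finset (Finset (Sym2 (Fin 4)))} (hF : IsCoverK4 Indep F) (h : #F ≤ 2) :
    ∃ a ∈ F, ∃ b ∈ F, Indep a ∧ Indep b ∧ E4 ⊆ a ∪ b := by
  obtain ⟨a, ha, b, hb, hab⟩ := exists_subset_union_of_card_le_two (by decide) hF.2 h
  exact ⟨a, ha, b, hb, hF.1 a ha, hF.1 b hb, hab⟩

theorem IsCoverK4.two_le_card {Indep : Finset (Sym2 (Fin 4)) → Prop}
    {F : Finset (Finset (Sym2 (Fin 4)))} (hF : IsCoverK4 Indep F)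
    (hsubset : ∀ ⦃a b⦄, Indep b → a ⊆ b → Indep a) (hE4 : ¬Indep E4) : 2 ≤ #F := by
  by_contra! h
  obtain ⟨a, ha, b, hb, hia, -, hab⟩ := hF.exists_subset_union h.le
  obtain rfl := card_le_one.1 (Nat.le_of_lt_succ h) a ha b hb
  exact hE4 (hsubset hia (union_self a ▸ hab))

theorem IsCoverK4.three_le_card {F : Finset (Finset (Sym2 (Fin 4)))}
    (hF : IsCoverK4 (fun e => graphicIndep e ∧ pmIndep e) F) : 3 ≤ #F := by
  by_contra! h
  obtain ⟨a, -, b, -, ⟨hga, hpa⟩, ⟨hgb, hpb⟩, hab⟩ := hF.exists_subset_union (by omega)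
  have hsdiff : E4 \ a ⊆ b := sdiff_le_iff.2 hab
  obtain ⟨x₀, h₀, x₁, h₁, x₂, h₂, rfl⟩ :=
    exists_eq_transversal_of_pmIndep_sdiff hpa (hpb.subset hsdiff)
  exact not_graphicIndep_transversal_and_sdiff x₀ h₀ x₁ h₁ x₂ h₂ ⟨hga, hgb.subset hsdiff⟩

/-- For `P` the graphic matroid of `K₄` and `Q` the partition matroid of the three perfect
matchings, `β(P) = 2`, `β(Q) = 2`, but `β(P ∩ Q) = 3`. -/
theorem stmt12 :
    betaK4 graphicIndep = 2 ∧ betaK4 pmIndep = 2 ∧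
      betaK4 (fun e => graphicIndep e ∧ pmIndep e) = 3 := by
  refine ⟨?_, ?_, ?_⟩
  · exact betaK4_eq (F := {{s(0, 1), s(1, 2), s(2, 3)}, {s(0, 2), s(0, 3), s(1, 3)}})
      ⟨by decide +kernel, by decide +kernel⟩ (by decide +kernel)
      fun _ hF => hF.two_le_card (fun _ _ => graphicIndep.subset) (by decide)
  · exact betaK4_eq (F := {{s(0, 1), s(0, 2), s(0, 3)}, {s(1, 2), s(1, 3), s(2, 3)}})
      ⟨by decide +kernel, by decide +kernel⟩ (by decide +kernel)
      fun _ hF => hF.two_le_card (fun _ _ => pmIndep.subset) (by decide)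
  · exact betaK4_eq (F := {{s(0, 1), s(0, 2)}, {s(0, 3), s(1, 3)}, {s(1, 2), s(2, 3)}})
      ⟨by decide +kernel, by decide +kernel⟩ (by decide +kernel) fun _ hF => hF.three_le_card
end

section
/- Let P be the graphic matroid on E(K₄) and Q its dual matroid, and let (A₁, A₂, A₃) be the partition of E(K₄) into the three perfect matchings. Then there is no set S independent in both P and Q that meets all three of A₁, A₂, A₃. -/
open Finset

/-- Independence in the dual of the graphic matroid of `K₄`: the complement contains a
spanning tree, i.e. the graph on the complementary edges is (spanning) connected. -/
noncomputable def dualIndep (e : Finset (Sym2 (Fin 4))) : Prop :=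
  ↑e ⊆ (⊤ : SimpleGraph (Fin 4)).edgeSet ∧
    (SimpleGraph.fromEdgeSet ((E4 \ e : Finset (Sym2 (Fin 4))) : Set (Sym2 (Fin 4)))).Connected

lemma triangle_not_acyclic {V : Type*} {G : SimpleGraph V} {a b c : V}
    (hab : G.Adj a b) (hbc : G.Adj b c) (hca : G.Adj c a) : ¬ G.IsAcyclic := by
  intro h
  refine h (SimpleGraph.Walk.cons hab (SimpleGraph.Walk.cons hbc
    (SimpleGraph.Walk.cons hca SimpleGraph.Walk.nil))) ⟨⟨?_, by simp⟩, ?_⟩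
  · constructor
    simp [SimpleGraph.Walk.edges, Sym2.eq, Sym2.rel_iff', hab.ne, hbc.ne, hca.ne, hca.ne.symm,
      hab.ne.symm, hbc.ne.symm]
  · simp [hbc.ne, hab.ne.symm, hca.ne]

lemma no_nbr_not_connected {G : SimpleGraph (Fin 4)} {v : Fin 4}
    (h : ∀ w, ¬ G.Adj v w) : ¬ G.Connected := by
  intro hc
  obtain ⟨u, hu⟩ := exists_ne v
  obtain ⟨p⟩ := hc.preconnected v u
  cases p with
  | nil => exact hu rfl
  | cons h' _ => exact h _ h'

lemma mem_swap {S : Finset (Sym2 (Fin 4))} {a b : Fin 4} (h : s(a, b) ∈ S) : s(b, a) ∈ S :=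
  Sym2.eq_swap ▸ h

lemma star_not_dual (S : Finset (Sym2 (Fin 4))) (v : Fin 4)
    (h : ∀ w : Fin 4, w ≠ v → s(v, w) ∈ S) :
    ¬ (SimpleGraph.fromEdgeSet ((E4 \ S : Finset (Sym2 (Fin 4))) : Set (Sym2 (Fin 4)))).Connected := by
  apply no_nbr_not_connected (v := v)
  intro w hadj
  rw [SimpleGraph.fromEdgeSet_adj] at hadj
  obtain ⟨hm, hne⟩ := hadj
  rw [Finset.mem_coe, Finset.mem_sdiff] at hm
  exact hm.2 (h w hne.symm)

/-- With `P` the graphic matroid of `K₄` and `Q` its dual, no common independent set meets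
all three perfect matchings of `K₄`. -/
theorem stmt13 :
    ¬ ∃ S : Finset (Sym2 (Fin 4)), graphicIndep S ∧ dualIndep S ∧
      ∀ i : Fin 3, (S ∩ PM i).Nonempty := by
  rintro ⟨S, ⟨-, hac⟩, ⟨-, hconn⟩, hmeet⟩
  have adj : ∀ a b : Fin 4, s(a, b) ∈ S → a ≠ b →
      (SimpleGraph.fromEdgeSet (S : Set (Sym2 (Fin 4)))).Adj a b := fun a b h hne =>
    (SimpleGraph.fromEdgeSet_adj _).mpr ⟨Finset.mem_coe.mpr h, hne⟩
  have h0 : s(0, 1) ∈ S ∨ s(2, 3) ∈ S := by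
    obtain ⟨e, he⟩ := hmeet 0
    simp only [PM, Finset.mem_inter, Finset.mem_insert, Finset.mem_singleton] at he
    rcases he with ⟨hS, h | h⟩ <;> subst h <;> tauto
  have h1 : s(0, 2) ∈ S ∨ s(1, 3) ∈ S := by
    obtain ⟨e, he⟩ := hmeet 1
    simp only [PM, Finset.mem_inter, Finset.mem_insert, Finset.mem_singleton] at he
    rcases he with ⟨hS, h | h⟩ <;> subst h <;> tauto
  have h2 : s(0, 3) ∈ S ∨ s(1, 2) ∈ S := by
    obtain ⟨e, he⟩ := hmeet 2
    simp only [PM, Finset.mem_inter, Finset.mem_insert, Finset.mem_singleton] at he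
    rcases he with ⟨hS, h | h⟩ <;> subst h <;> tauto
  rcases h0 with h0 | h0 <;> rcases h1 with h1 | h1 <;> rcases h2 with h2 | h2
  · -- star at 0 : s(0,1), s(0,2), s(0,3)
    refine star_not_dual S 0 ?_ hconn
    intro w hw; fin_cases w
    · exact absurd rfl hw
    · exact h0
    · exact h1
    · exact h2
  · -- triangle 0,1,2 : s(0,1), s(0,2), s(1,2)
    exact triangle_not_acyclic (adj 0 1 h0 (by decide)) (adj 1 2 h2 (by decide))
      (adj 2 0 (mem_swap h1) (by decide)) hac
  · -- triangle 0,1,3 : s(0,1), s(1,3), s(0,3)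
    exact triangle_not_acyclic (adj 0 1 h0 (by decide)) (adj 1 3 h1 (by decide))
      (adj 3 0 (mem_swap h2) (by decide)) hac
  · -- star at 1 : s(0,1), s(1,3), s(1,2)
    refine star_not_dual S 1 ?_ hconn
    intro w hw; fin_cases w
    · exact mem_swap h0
    · exact absurd rfl hw
    · exact h2
    · exact h1
  · -- triangle 0,2,3 : s(2,3), s(0,2), s(0,3)
    exact triangle_not_acyclic (adj 0 2 h1 (by decide)) (adj 2 3 h0 (by decide))
      (adj 3 0 (mem_swap h2) (by decide)) hac
  · -- star at 2 : s(2,3), s(0,2), s(1,2)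
    refine star_not_dual S 2 ?_ hconn
    intro w hw; fin_cases w
    · exact mem_swap h1
    · exact mem_swap h2
    · exact absurd rfl hw
    · exact h0
  · -- star at 3 : s(2,3), s(1,3), s(0,3)
    refine star_not_dual S 3 ?_ hconn
    intro w hw; fin_cases w
    · exact mem_swap h2
    · exact mem_swap h1
    · exact mem_swap h0
    · exact absurd rfl hw
  · -- triangle 1,2,3 : s(2,3), s(1,3), s(1,2)
    exact triangle_not_acyclic (adj 1 2 h2 (by decide)) (adj 2 3 h0 (by decide))
      (adj 3 1 (mem_swap h1) (by decide)) hac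
end

section
/- If P and Q are matroids on the same ground set V with D = P ∩ Q, and S, T ∈ D with |S| = |T|, and x ∈ S, then there exists t ∈ T such that (S − x) + t is independent in P, and moreover either (S − x) + t ∈ D, or there exists s ∈ S − x such that (S − x) + t − s ∈ D. -/
open Finset

variable {V : Type*} [Fintype V] [DecidableEq V]

lemma augment_aux {V : Type*} [DecidableEq V] {Q : Finset V → Prop} (hQ : IsMatroid Q) :
    ∀ n (I J : Finset V), Q I → Q J → J.card ≤ I.card + n →
      ∃ K, I ⊆ K ∧ K ⊆ I ∪ J ∧ Q K ∧ J.card ≤ K.card := by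
  intro n
  induction n with
  | zero => intro I J hI hJ h; exact ⟨I, subset_rfl, subset_union_left, hI, by omega⟩
  | succ n ih =>
    intro I J hI hJ h
    by_cases hc : J.card ≤ I.card
    · exact ⟨I, subset_rfl, subset_union_left, hI, hc⟩
    · obtain ⟨y, hyJ, hyI, hins⟩ := hQ.2.2 hI hJ (by omega)
      have hcard : (insert y I).card = I.card + 1 := Finset.card_insert_of_notMem hyI
      obtain ⟨K, h1, h2, h3, h4⟩ := ih (insert y I) J hins hJ (by omega)
      refine ⟨K, (Finset.subset_insert y I).trans h1, h2.trans ?_, h3, h4⟩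
      intro z hz
      rcases Finset.mem_union.mp hz with hz | hz
      · rcases Finset.mem_insert.mp hz with rfl | hz
        · exact Finset.mem_union_right _ hyJ
        · exact Finset.mem_union_left _ hz
      · exact Finset.mem_union_right _ hz

/-- The single exchange step in a dimatroid: for `S, T ∈ D = P ∩ Q` with `|S| = |T|` and
`x ∈ S`, there is `t ∈ T` with `(S - x) + t ∈ P`, and moreover either `(S - x) + t ∈ D`
or some `s ∈ S - x` has `(S - x) + t - s ∈ D`. -/
theorem stmt14 (P Q : Finset V → Prop) (hP : IsMatroid P) (hQ : IsMatroid Q)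
    (S T : Finset V) (hS : P S ∧ Q S) (hT : P T ∧ Q T) (hcard : S.card = T.card)
    (x : V) (hx : x ∈ S) :
    ∃ t ∈ T, P (insert t (S.erase x)) ∧
      ((P (insert t (S.erase x)) ∧ Q (insert t (S.erase x))) ∨
        ∃ s ∈ S.erase x, P ((insert t (S.erase x)).erase s) ∧
          Q ((insert t (S.erase x)).erase s)) := by
  classical
  have hSx : P (S.erase x) := hP.2.1 hS.1 (Finset.erase_subset x S)
  have hS0 : 0 < S.card := Finset.card_pos.mpr ⟨x, hx⟩
  have hcx : (S.erase x).card = S.card - 1 := Finset.card_erase_of_mem hx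
  obtain ⟨t, htT, htx, hPA⟩ := hP.2.2 hSx hT.1 (by omega)
  set A := insert t (S.erase x) with hA
  refine ⟨t, htT, hPA, ?_⟩
  by_cases hQA : Q A
  · exact Or.inl ⟨hPA, hQA⟩
  · have hQt : Q {t} := hQ.2.1 hT.2 (Finset.singleton_subset_iff.mpr htT)
    have hQSx : Q (S.erase x) := hQ.2.1 hS.2 (Finset.erase_subset x S)
    obtain ⟨K, hK1, hK2, hK3, hK4⟩ := augment_aux hQ (S.erase x).card {t} (S.erase x)
      hQt hQSx (by simp)
    have hKA : K ⊆ A := by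
      refine hK2.trans ?_
      intro z hz
      rcases Finset.mem_union.mp hz with hz | hz
      · simp [hA, Finset.mem_singleton.mp hz]
      · exact Finset.mem_insert_of_mem hz
    have hAcard : A.card = (S.erase x).card + 1 := Finset.card_insert_of_notMem htx
    have hKne : K ≠ A := fun h => hQA (h ▸ hK3)
    have hKlt : K.card < A.card :=
      Finset.card_lt_card (lt_of_le_of_ne hKA hKne)
    have hKcard : K.card = (S.erase x).card := by omega
    obtain ⟨s, hsA, hsK⟩ := Finset.exists_of_ssubset (lt_of_le_of_ne hKA hKne)
    have htK : t ∈ K := hK1 (Finset.mem_singleton_self t)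
    have hst : s ≠ t := fun h => hsK (h ▸ htK)
    have hsSx : s ∈ S.erase x := by
      rcases Finset.mem_insert.mp hsA with h | h
      · exact absurd h hst
      · exact h
    have hKeq : K = A.erase s := by
      apply Finset.eq_of_subset_of_card_le
      · intro z hz
        exact Finset.mem_erase.mpr ⟨fun h => hsK (h ▸ hz), hKA hz⟩
      · rw [Finset.card_erase_of_mem hsA]; omega
    exact Or.inr ⟨s, hsSx, hP.2.1 hPA (Finset.erase_subset s A), hKeq ▸ hK3⟩
end
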